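/- arXiv:0907.0023 — 6 statements merged into one kernel-verified Lean document; each statement's English description precedes it below -/
import Mathlib

section
/- Let D be a d''-dimensional subspace of 𝓔, let θ ≥ 0, and let D_∞ be a d''-dimensional subspace such that dist(e^{t𝔞}D, e^{t𝔞'}D_∞) → 0 as Re t → ∞ with t ∈ S_θ. Then the limit set Ω^+_θ(D) = {D' : there exists a sequence t_ν ∈ S_θ with Re t_ν → ∞ and e^{t_ν𝔞}D → D'} equals the closure in the Grassmannian Gr_{d''}(𝓔) of the set {e^{t𝔞'}D_∞ : t ∈ S_θ}. -/
open Filter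

noncomputable section

/-- The orthogonal projection onto a subspace of a finite-dimensional complex
inner product space, viewed as an endomorphism. -/
def oproj {𝓔 : Type*} [NormedAddCommGroup 𝓔] [InnerProductSpace ℂ 𝓔]
    [FiniteDimensional ℂ 𝓔] (V : Submodule ℂ 𝓔) : 𝓔 →L[ℂ] 𝓔 :=
  V.subtypeL.comp (Submodule.orthogonalProjectionOnto V)

/-- `pdist V W = ‖P_V − P_W‖`, the metric of the Grassmannian. -/
def pdist {𝓔 : Type*} [NormedAddCommGroup 𝓔] [InnerProductSpace ℂ 𝓔]
    [FiniteDimensional ℂ 𝓔] (V W : Submodule ℂ 𝓔) : ℝ :=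
  ‖oproj V - oproj W‖

lemma exp_apply_eigenvec {𝓔 : Type*} [NormedAddCommGroup 𝓔] [NormedSpace ℂ 𝓔] [CompleteSpace 𝓔]
    (B : 𝓔 →L[ℂ] 𝓔) (c : ℂ) (x : 𝓔) (h : B x = c • x) :
    NormedSpace.exp B x = Complex.exp c • x := by
  have hpow : ∀ n : ℕ, (B ^ n) x = c ^ n • x := by
    intro n
    induction n with
    | zero => simp
    | succ n ih =>
      rw [pow_succ, ContinuousLinearMap.mul_apply, h, map_smul, ih, smul_smul, mul_comm,
        ← pow_succ]
  have h1 : NormedSpace.exp B x = ∑' n : ℕ, (((n.factorial : ℂ))⁻¹ • B ^ n) x := by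
    rw [NormedSpace.exp_eq_tsum ℂ]
    simpa using ((ContinuousLinearMap.apply ℂ 𝓔 x).map_tsum
      (NormedSpace.expSeries_summable' (𝕂 := ℂ) B))
  have h2 : ∀ n : ℕ, (((n.factorial : ℂ))⁻¹ • B ^ n) x = (((n.factorial : ℂ))⁻¹ * c ^ n) • x := by
    intro n; rw [ContinuousLinearMap.smul_apply, hpow, smul_smul]
  rw [h1]
  simp_rw [h2]
  rw [Summable.tsum_smul_const (by simpa [smul_eq_mul] using NormedSpace.expSeries_summable' (𝕂 := ℂ) c)]
  congr 1
  rw [Complex.exp_eq_exp_ℂ, NormedSpace.exp_eq_tsum ℂ]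
  simp [smul_eq_mul]

lemma submodule_map_mul {𝓔 : Type*} [NormedAddCommGroup 𝓔] [InnerProductSpace ℂ 𝓔]
    (A B : 𝓔 →L[ℂ] 𝓔) (V : Submodule ℂ 𝓔) :
    V.map ((A * B : 𝓔 →L[ℂ] 𝓔) : 𝓔 →ₗ[ℂ] 𝓔) = (V.map (B : 𝓔 →ₗ[ℂ] 𝓔)).map (A : 𝓔 →ₗ[ℂ] 𝓔) := by
  ext x
  simp only [Submodule.mem_map, ContinuousLinearMap.coe_coe, ContinuousLinearMap.mul_apply]
  constructor
  · rintro ⟨y, hy, rfl⟩; exact ⟨B y, ⟨y, hy, rfl⟩, rfl⟩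
  · rintro ⟨z, ⟨y, hy, rfl⟩, rfl⟩; exact ⟨y, hy, rfl⟩

lemma pdist_map_le {𝓔 : Type*} [NormedAddCommGroup 𝓔] [InnerProductSpace ℂ 𝓔]
    [FiniteDimensional ℂ 𝓔] (g h : 𝓔 →L[ℂ] 𝓔)
    (hgh : ∀ x, g (h x) = x) (hhg : ∀ x, h (g x) = x)
    (hg : ∀ x y : 𝓔, inner ℂ (g x) (g y) = inner ℂ x y)
    (V : Submodule ℂ 𝓔) :
    pdist (V.map (g : 𝓔 →ₗ[ℂ] 𝓔)) V ≤ 2 * ‖g - 1‖ := by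
  have hgn : ∀ x, ‖g x‖ = ‖x‖ := by
    intro x
    rw [@norm_eq_sqrt_re_inner ℂ 𝓔 _ _ _ (g x), @norm_eq_sqrt_re_inner ℂ 𝓔 _ _ _ x, hg]
  have hhn : ∀ x, ‖h x‖ = ‖x‖ := fun x => by rw [← hgn (h x), hgh]
  have hproj : ∀ x, oproj (V.map (g : 𝓔 →ₗ[ℂ] 𝓔)) x = g (oproj V (h x)) := by
    intro x
    have hmem : g ((V.orthogonalProjectionOnto (h x) : 𝓔)) ∈ V.map (g : 𝓔 →ₗ[ℂ] 𝓔) :=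
      Submodule.mem_map_of_mem (V.orthogonalProjectionOnto (h x)).2
    have horthog : ∀ w ∈ V.map (g : 𝓔 →ₗ[ℂ] 𝓔),
        inner ℂ (x - g ((V.orthogonalProjectionOnto (h x) : 𝓔))) w = 0 := by
      rintro w ⟨y, hy, rfl⟩
      have hx : x - g ((V.orthogonalProjectionOnto (h x) : 𝓔))
          = g (h x - (V.orthogonalProjectionOnto (h x) : 𝓔)) := by
        rw [map_sub, hgh]
      rw [hx, ContinuousLinearMap.coe_coe, hg]
      exact Submodule.starProjection_inner_eq_zero (h x) y hy
    have := Submodule.eq_starProjection_of_mem_of_inner_eq_zero hmem horthog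
    simpa [oproj] using this
  have hP : ∀ y, ‖oproj V y‖ ≤ ‖y‖ := by
    intro y
    have h1 : ‖(V.orthogonalProjectionOnto : 𝓔 →L[ℂ] V)‖ ≤ 1 := Submodule.orthogonalProjectionOnto_norm_le V
    calc ‖oproj V y‖ = ‖V.orthogonalProjectionOnto y‖ := by simp [oproj]
      _ ≤ ‖(V.orthogonalProjectionOnto : 𝓔 →L[ℂ] V)‖ * ‖y‖ := ContinuousLinearMap.le_opNorm _ _
      _ ≤ 1 * ‖y‖ := mul_le_mul_of_nonneg_right h1 (norm_nonneg y)
      _ = ‖y‖ := one_mul _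
  have key : ∀ x, ‖(oproj (V.map (g : 𝓔 →ₗ[ℂ] 𝓔)) - oproj V) x‖ ≤ (2 * ‖g - 1‖) * ‖x‖ := by
    intro x
    have hd1 : ∀ y : 𝓔, ‖g y - y‖ ≤ ‖g - 1‖ * ‖y‖ := by
      intro y
      have : g y - y = (g - 1) y := by
        simp [ContinuousLinearMap.sub_apply]
      rw [this]; exact ContinuousLinearMap.le_opNorm _ _
    have hd2 : ‖h x - x‖ ≤ ‖g - 1‖ * ‖x‖ := by
      have e : h x - x = h (x - g x) := by rw [map_sub, hhg]
      rw [e, hhn]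
      calc ‖x - g x‖ = ‖g x - x‖ := norm_sub_rev _ _
        _ ≤ ‖g - 1‖ * ‖x‖ := hd1 x
    have e1 : (oproj (V.map (g : 𝓔 →ₗ[ℂ] 𝓔)) - oproj V) x
        = (g (oproj V (h x)) - oproj V (h x)) + (oproj V (h x) - oproj V x) := by
      rw [ContinuousLinearMap.sub_apply, hproj]; abel
    have hb1 : ‖g (oproj V (h x)) - oproj V (h x)‖ ≤ ‖g - 1‖ * ‖x‖ := by
      refine (hd1 _).trans ?_
      have := (hP (h x)).trans (le_of_eq (hhn x))
      exact mul_le_mul_of_nonneg_left this (norm_nonneg _)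
    have hb2 : ‖oproj V (h x) - oproj V x‖ ≤ ‖g - 1‖ * ‖x‖ := by
      rw [← map_sub]
      exact (hP _).trans hd2
    calc ‖(oproj (V.map (g : 𝓔 →ₗ[ℂ] 𝓔)) - oproj V) x‖
        ≤ ‖g (oproj V (h x)) - oproj V (h x)‖ + ‖oproj V (h x) - oproj V x‖ := by
          rw [e1]; exact norm_add_le _ _
      _ ≤ ‖g - 1‖ * ‖x‖ + ‖g - 1‖ * ‖x‖ := add_le_add hb1 hb2
      _ = (2 * ‖g - 1‖) * ‖x‖ := by ring
  exact ContinuousLinearMap.opNorm_le_bound _ (by positivity) key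

lemma recurrence_circle (S : Finset ℂ) {δ : ℝ} (hδ : 0 < δ) (R : ℝ) :
    ∃ r : ℝ, R < r ∧ ∀ a ∈ S,
      ‖Complex.exp ((r : ℂ) * (Complex.I * (a.im : ℂ))) - 1‖ < δ := by
  classical
  set M : ℝ := max R 0 + 1 with hMdef
  have hM0 : 0 < M := by
    have : (0 : ℝ) ≤ max R 0 := le_max_right R 0
    simp only [hMdef]; linarith
  have hMR : R < M := by
    have : R ≤ max R 0 := le_max_left R 0
    simp only [hMdef]; linarith
  set ω : ℂ → ℝ := fun a => a.im * M with hωdef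
  set F : ℕ → (S → ℂ) := fun n a => Complex.exp (((n : ℝ) * ω a : ℝ) * Complex.I) with hFdef
  have hFb : ∀ n, F n ∈ Metric.closedBall (0 : S → ℂ) 1 := by
    intro n
    rw [Metric.mem_closedBall, dist_zero_right]
    refine (pi_norm_le_iff_of_nonneg zero_le_one).2 fun a => ?_
    have h1 : ‖F n a‖ = 1 := by
      simp only [hFdef]; exact Complex.norm_exp_ofReal_mul_I _
    rw [h1]
  obtain ⟨L, -, φ, hφ, hconv⟩ :=
    tendsto_subseq_of_bounded Metric.isBounded_closedBall hFb
  obtain ⟨N, hN⟩ := Metric.cauchySeq_iff.1 hconv.cauchySeq δ hδ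
  have hlt : φ N < φ (N + 1) := hφ (Nat.lt_succ_self N)
  set k : ℕ := φ (N + 1) - φ N with hkdef
  have hk1 : 1 ≤ k := by omega
  have hkk : φ N + k = φ (N + 1) := by omega
  refine ⟨k * M, ?_, ?_⟩
  · have : M ≤ (k : ℝ) * M := le_mul_of_one_le_left hM0.le (by exact_mod_cast hk1)
    linarith
  · intro a ha
    have hd : dist ((F ∘ φ) (N + 1)) ((F ∘ φ) N) < δ := hN (N + 1) (Nat.le_succ N) N le_rfl
    have hcoord : dist (F (φ (N + 1)) ⟨a, ha⟩) (F (φ N) ⟨a, ha⟩) < δ :=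
      lt_of_le_of_lt (dist_le_pi_dist _ _ _) hd
    have e1 : Complex.exp (-((((φ N : ℝ)) * ω a : ℝ) * Complex.I))
        * Complex.exp ((((φ (N + 1) : ℝ)) * ω a : ℝ) * Complex.I)
        = Complex.exp ((((k : ℝ)) * ω a : ℝ) * Complex.I) := by
      rw [← Complex.exp_add]; congr 1; rw [← hkk]; push_cast; ring
    have e2 : Complex.exp (-((((φ N : ℝ)) * ω a : ℝ) * Complex.I))
        * Complex.exp ((((φ N : ℝ)) * ω a : ℝ) * Complex.I) = 1 := by
      rw [← Complex.exp_add]; simp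
    have e3 : (((k : ℝ) * M : ℝ) : ℂ) * (Complex.I * (a.im : ℂ))
        = (((k : ℝ) * ω a : ℝ) : ℂ) * Complex.I := by
      simp only [hωdef]; push_cast; ring
    have key : Complex.exp ((((k : ℝ) * M : ℝ) : ℂ) * (Complex.I * ((a : ℂ).im : ℂ))) - 1
        = Complex.exp (-((((φ N : ℝ)) * ω a : ℝ) * Complex.I))
          * (F (φ (N + 1)) ⟨a, ha⟩ - F (φ N) ⟨a, ha⟩) := by
      simp only [hFdef]
      rw [mul_sub, e1, e2, e3]
    rw [key, norm_mul]
    have habs : ‖Complex.exp (-((((φ N : ℝ)) * ω a : ℝ) * Complex.I))‖ = 1 := by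
      have : -((((φ N : ℝ)) * ω a : ℝ) * Complex.I)
          = ((-((φ N : ℝ) * ω a) : ℝ) : ℂ) * Complex.I := by
        push_cast; ring
      rw [this, Complex.norm_exp_ofReal_mul_I]
    rw [habs, one_mul]
    simpa [Complex.dist_eq] using hcoord

/-- Setting as in Statement 0: `𝓔` is a finite-dimensional complex inner
product space whose inner product makes the generalized eigenspaces of `𝔞` pairwise
orthogonal, `π μ` is the projection onto the generalized eigenspace for `μ` along the
others, and `𝔞' = Σ (i Im μ) π_μ`.  Let `D` be a `d''`-dimensional subspace, `θ ≥ 0`, and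
`D_∞` a `d''`-dimensional subspace with `dist(e^{t𝔞}D, e^{t𝔞'}D_∞) → 0` as `Re t → ∞`
in `S_θ`.  Then the limit set
`Ω⁺_θ(D) = {D' : ∃ t_ν ∈ S_θ, Re t_ν → ∞, e^{t_ν 𝔞}D → D'}`
equals the closure in `Gr_{d''}(𝓔)` of `{e^{t𝔞'}D_∞ : t ∈ S_θ}`. -/
theorem stmt_1
    (𝓔 : Type*) [NormedAddCommGroup 𝓔] [InnerProductSpace ℂ 𝓔] [FiniteDimensional ℂ 𝓔]
    (𝔞 : 𝓔 →L[ℂ] 𝓔)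
    (Λs : Finset ℂ)
    (hΛs : ∀ μ : ℂ, μ ∈ Λs ↔ Module.End.HasEigenvalue (𝔞 : 𝓔 →ₗ[ℂ] 𝓔) μ)
    (horth : ∀ μ ∈ Λs, ∀ μ' ∈ Λs, μ ≠ μ' →
      ∀ x ∈ Module.End.maxGenEigenspace (𝔞 : 𝓔 →ₗ[ℂ] 𝓔) μ,
      ∀ y ∈ Module.End.maxGenEigenspace (𝔞 : 𝓔 →ₗ[ℂ] 𝓔) μ', @inner ℂ _ _ x y = 0)
    (π : ℂ → (𝓔 →L[ℂ] 𝓔))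
    (hπ_id : ∀ μ ∈ Λs, ∀ x ∈ Module.End.maxGenEigenspace (𝔞 : 𝓔 →ₗ[ℂ] 𝓔) μ, π μ x = x)
    (hπ_ann : ∀ μ ∈ Λs, ∀ μ' ∈ Λs, μ ≠ μ' →
      ∀ x ∈ Module.End.maxGenEigenspace (𝔞 : 𝓔 →ₗ[ℂ] 𝓔) μ', π μ x = 0)
    (hπ_mem : ∀ μ ∈ Λs, ∀ x : 𝓔, π μ x ∈ Module.End.maxGenEigenspace (𝔞 : 𝓔 →ₗ[ℂ] 𝓔) μ)
    (𝔞' : 𝓔 →L[ℂ] 𝓔)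
    (h𝔞' : 𝔞' = ∑ μ ∈ Λs, (Complex.I * (μ.im : ℂ)) • π μ)
    (θ : ℝ) (hθ : 0 ≤ θ)
    (d'' : ℕ) (D Dinf : Submodule ℂ 𝓔)
    (hD : Module.finrank ℂ D = d'') (hDinf : Module.finrank ℂ Dinf = d'')
    (hconv : ∀ ε : ℝ, 0 < ε → ∃ R : ℝ, ∀ t : ℂ, |t.im| ≤ θ → R < t.re →
      pdist (D.map ((NormedSpace.exp (t • 𝔞) : 𝓔 →L[ℂ] 𝓔) : 𝓔 →ₗ[ℂ] 𝓔)) (Dinf.map ((NormedSpace.exp (t • 𝔞') : 𝓔 →L[ℂ] 𝓔) : 𝓔 →ₗ[ℂ] 𝓔)) < ε) :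
    {D' : Submodule ℂ 𝓔 | Module.finrank ℂ D' = d'' ∧
        ∃ t : ℕ → ℂ, (∀ ν, |(t ν).im| ≤ θ) ∧
          Tendsto (fun ν => (t ν).re) atTop atTop ∧
          Tendsto (fun ν => pdist (D.map ((NormedSpace.exp (t ν • 𝔞) : 𝓔 →L[ℂ] 𝓔) : 𝓔 →ₗ[ℂ] 𝓔)) D') atTop (nhds 0)}
      = {D' : Submodule ℂ 𝓔 | Module.finrank ℂ D' = d'' ∧
          ∀ ε : ℝ, 0 < ε → ∃ t : ℂ, |t.im| ≤ θ ∧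
            pdist (Dinf.map ((NormedSpace.exp (t • 𝔞') : 𝓔 →L[ℂ] 𝓔) : 𝓔 →ₗ[ℂ] 𝓔)) D' < ε} := by
  classical
  -- Σ π = 1
  have hsum : ∀ x : 𝓔, ∑ μ ∈ Λs, π μ x = x := by
    intro x
    have htop : x ∈ ⨆ μ : ℂ, Module.End.maxGenEigenspace (𝔞 : 𝓔 →ₗ[ℂ] 𝓔) μ := by
      rw [Module.End.iSup_maxGenEigenspace_eq_top]; exact Submodule.mem_top
    refine Submodule.iSup_induction' _
      (motive := fun y _ => ∑ μ ∈ Λs, π μ y = y) ?_ (by simp) ?_ htop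
    · intro μ₀ y hy
      by_cases hy0 : y = 0
      · simp [hy0]
      · have hμ₀ : μ₀ ∈ Λs := by
          rw [hΛs]
          obtain ⟨kk, hk⟩ := (Module.End.mem_maxGenEigenspace _ _ _).1 hy
          refine Module.End.hasEigenvalue_of_hasGenEigenvalue (k := kk) ?_
          rw [Module.End.hasGenEigenvalue_iff, Submodule.ne_bot_iff]
          exact ⟨y, Module.End.mem_genEigenspace_nat.2 (LinearMap.mem_ker.2 hk), hy0⟩
        rw [Finset.sum_eq_single_of_mem μ₀ hμ₀ fun b hb hne => hπ_ann b hb μ₀ hμ₀ hne y hy]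
        exact hπ_id μ₀ hμ₀ y hy
    · intro y z _ _ hy hz
      simp only [map_add]
      rw [Finset.sum_add_distrib, hy, hz]
  -- eigen action of exp (t 𝔞')
  have heig : ∀ μ ∈ Λs, ∀ x ∈ Module.End.maxGenEigenspace (𝔞 : 𝓔 →ₗ[ℂ] 𝓔) μ, ∀ t : ℂ,
      NormedSpace.exp (t • 𝔞') x = Complex.exp (t * (Complex.I * (μ.im : ℂ))) • x := by
    intro μ hμ x hx t
    refine exp_apply_eigenvec _ _ _ ?_
    have h1 : 𝔞' x = (Complex.I * (μ.im : ℂ)) • x := by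
      rw [h𝔞', ContinuousLinearMap.sum_apply,
        Finset.sum_eq_single_of_mem μ hμ (fun b hb hne => by
          rw [ContinuousLinearMap.smul_apply, hπ_ann b hb μ hμ hne x hx, smul_zero])]
      rw [ContinuousLinearMap.smul_apply, hπ_id μ hμ x hx]
    rw [ContinuousLinearMap.smul_apply, h1, smul_smul]
  have hexp_pt : ∀ (t : ℂ) (x : 𝓔), NormedSpace.exp (t • 𝔞') x
      = ∑ μ ∈ Λs, Complex.exp (t * (Complex.I * (μ.im : ℂ))) • π μ x := by
    intro t x
    conv_lhs => rw [← hsum x, map_sum]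
    exact Finset.sum_congr rfl fun μ hμ => heig μ hμ (π μ x) (hπ_mem μ hμ x) t
  have hinner : ∀ x y : 𝓔, inner ℂ x y = ∑ μ ∈ Λs, inner ℂ (π μ x) (π μ y) := by
    intro x y
    conv_lhs => rw [← hsum x, ← hsum y]
    rw [sum_inner]
    refine Finset.sum_congr rfl fun μ hμ => ?_
    rw [inner_sum]
    exact Finset.sum_eq_single_of_mem μ hμ fun μ' hμ' hne =>
      horth μ hμ μ' hμ' (Ne.symm hne) _ (hπ_mem μ hμ x) _ (hπ_mem μ' hμ' y)
  have hcomm : ∀ s t : ℂ, NormedSpace.exp ((s + t) • 𝔞')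
      = NormedSpace.exp (s • 𝔞') * NormedSpace.exp (t • 𝔞') := by
    intro s t
    rw [add_smul]
    exact NormedSpace.exp_add_of_commute_of_mem_ball (𝕂 := ℂ) (((Commute.refl 𝔞').smul_left s).smul_right t)
      ((NormedSpace.expSeries_radius_eq_top ℂ (𝓔 →L[ℂ] 𝓔)).symm ▸ edist_lt_top _ _)
      ((NormedSpace.expSeries_radius_eq_top ℂ (𝓔 →L[ℂ] 𝓔)).symm ▸ edist_lt_top _ _)
  have hinv : ∀ t : ℂ, ∀ x : 𝓔,
      NormedSpace.exp (t • 𝔞') (NormedSpace.exp ((-t) • 𝔞') x) = x := by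
    intro t x
    have h1 := hcomm t (-t)
    rw [add_neg_cancel, zero_smul, NormedSpace.exp_zero] at h1
    rw [← ContinuousLinearMap.mul_apply, ← h1, ContinuousLinearMap.one_apply]
  have hunit : ∀ r : ℝ, ∀ x y : 𝓔,
      inner ℂ (NormedSpace.exp (((r : ℝ) : ℂ) • 𝔞') x)
        (NormedSpace.exp (((r : ℝ) : ℂ) • 𝔞') y) = inner ℂ x y := by
    intro r x y
    rw [hexp_pt, hexp_pt, sum_inner, hinner x y]
    refine Finset.sum_congr rfl fun μ hμ => ?_
    rw [inner_sum, Finset.sum_eq_single_of_mem μ hμ (fun μ' hμ' hne => by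
      rw [inner_smul_left, inner_smul_right,
        horth μ hμ μ' hμ' (Ne.symm hne) _ (hπ_mem μ hμ x) _ (hπ_mem μ' hμ' y),
        mul_zero, mul_zero])]
    rw [inner_smul_left, inner_smul_right, ← mul_assoc]
    have hone : (starRingEnd ℂ) (Complex.exp (((r : ℝ) : ℂ) * (Complex.I * (μ.im : ℂ))))
        * Complex.exp (((r : ℝ) : ℂ) * (Complex.I * (μ.im : ℂ))) = 1 := by
      rw [← Complex.exp_conj, ← Complex.exp_add]
      have hconj : (starRingEnd ℂ) (((r : ℝ) : ℂ) * (Complex.I * (μ.im : ℂ)))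
          = -(((r : ℝ) : ℂ) * (Complex.I * (μ.im : ℂ))) := by
        rw [map_mul, map_mul, Complex.conj_I, Complex.conj_ofReal, Complex.conj_ofReal]
        ring
      rw [hconj, neg_add_cancel, Complex.exp_zero]
    rw [hone, one_mul]
  -- recurrence for exp(r 𝔞')
  have hrec : ∀ δ : ℝ, 0 < δ → ∀ R : ℝ, ∃ r : ℝ, R < r ∧
      ‖NormedSpace.exp (((r : ℝ) : ℂ) • 𝔞') - 1‖ < δ := by
    intro δ hδ R
    set C : ℝ := ∑ μ ∈ Λs, ‖π μ‖ with hCdef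
    have hC0 : 0 ≤ C := Finset.sum_nonneg fun μ _ => norm_nonneg _
    have hδ' : (0 : ℝ) < δ / (2 * (C + 1)) := by positivity
    obtain ⟨r, hrR, hr⟩ := recurrence_circle Λs hδ' R
    refine ⟨r, hrR, ?_⟩
    have hbound : ∀ x : 𝓔,
        ‖(NormedSpace.exp (((r : ℝ) : ℂ) • 𝔞') - 1) x‖ ≤ (δ / 2) * ‖x‖ := by
      intro x
      have h1 : ∑ μ ∈ Λs, (Complex.exp (((r : ℝ) : ℂ) * (Complex.I * (μ.im : ℂ))) - 1) • π μ x
          = (∑ μ ∈ Λs, Complex.exp (((r : ℝ) : ℂ) * (Complex.I * (μ.im : ℂ))) • π μ x)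
            - ∑ μ ∈ Λs, π μ x := by
        rw [← Finset.sum_sub_distrib]
        exact Finset.sum_congr rfl fun μ hμ => by rw [sub_smul, one_smul]
      have e : (NormedSpace.exp (((r : ℝ) : ℂ) • 𝔞') - 1) x
          = ∑ μ ∈ Λs, (Complex.exp (((r : ℝ) : ℂ) * (Complex.I * (μ.im : ℂ))) - 1) • π μ x := by
        rw [ContinuousLinearMap.sub_apply, ContinuousLinearMap.one_apply, hexp_pt, h1, hsum x]
      rw [e]
      have hterm : ∀ μ ∈ Λs,
          ‖(Complex.exp (((r : ℝ) : ℂ) * (Complex.I * (μ.im : ℂ))) - 1) • π μ x‖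
            ≤ (δ / (2 * (C + 1))) * (‖π μ‖ * ‖x‖) := by
        intro μ hμ
        rw [norm_smul]
        have h2 : ‖Complex.exp (((r : ℝ) : ℂ) * (Complex.I * (μ.im : ℂ))) - 1‖
            ≤ δ / (2 * (C + 1)) := by
          exact (hr μ hμ).le
        exact mul_le_mul h2 (ContinuousLinearMap.le_opNorm _ _) (norm_nonneg _) hδ'.le
      calc ‖∑ μ ∈ Λs, (Complex.exp (((r : ℝ) : ℂ) * (Complex.I * (μ.im : ℂ))) - 1) • π μ x‖
          ≤ ∑ μ ∈ Λs, ‖(Complex.exp (((r : ℝ) : ℂ) * (Complex.I * (μ.im : ℂ))) - 1) • π μ x‖ :=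
            norm_sum_le _ _
        _ ≤ ∑ μ ∈ Λs, (δ / (2 * (C + 1))) * (‖π μ‖ * ‖x‖) := Finset.sum_le_sum hterm
        _ = (δ / (2 * (C + 1))) * C * ‖x‖ := by
            rw [← Finset.mul_sum, ← Finset.sum_mul, ← hCdef]; ring
        _ ≤ (δ / 2) * ‖x‖ := by
            have : (δ / (2 * (C + 1))) * C ≤ δ / 2 := by
              rw [div_mul_eq_mul_div, div_le_div_iff₀ (by positivity) (by positivity)]
              nlinarith
            exact mul_le_mul_of_nonneg_right this (norm_nonneg x)
    have hop := ContinuousLinearMap.opNorm_le_bound _ (by positivity) hbound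
    linarith
  -- pdist lemmas
  have pdist_triangle : ∀ U V W : Submodule ℂ 𝓔, pdist U W ≤ pdist U V + pdist V W := by
    intro U V W
    have h0 : oproj U - oproj W = (oproj U - oproj V) + (oproj V - oproj W) := by abel
    show ‖oproj U - oproj W‖ ≤ ‖oproj U - oproj V‖ + ‖oproj V - oproj W‖
    rw [h0]; exact norm_add_le _ _
  have pdist_symm : ∀ U V : Submodule ℂ 𝓔, pdist U V = pdist V U := fun U V =>
    show ‖oproj U - oproj V‖ = ‖oproj V - oproj U‖ from norm_sub_rev _ _
  ext D'
  simp only [Set.mem_setOf_eq]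
  constructor
  · rintro ⟨hd, t, him, hre, hlim⟩
    refine ⟨hd, fun ε hε => ?_⟩
    obtain ⟨R, hR⟩ := hconv (ε / 2) (by positivity)
    have h1 : ∀ᶠ ν in atTop, R < (t ν).re := hre.eventually_gt_atTop R
    have h2 : ∀ᶠ ν in atTop, pdist (D.map ((NormedSpace.exp (t ν • 𝔞) : 𝓔 →L[ℂ] 𝓔) : 𝓔 →ₗ[ℂ] 𝓔)) D' < ε / 2 :=
      hlim.eventually (gt_mem_nhds (by positivity))
    obtain ⟨ν, hν1, hν2⟩ := (h1.and h2).exists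
    refine ⟨t ν, him ν, ?_⟩
    calc pdist (Dinf.map ((NormedSpace.exp (t ν • 𝔞') : 𝓔 →L[ℂ] 𝓔) : 𝓔 →ₗ[ℂ] 𝓔)) D'
        ≤ pdist (Dinf.map ((NormedSpace.exp (t ν • 𝔞') : 𝓔 →L[ℂ] 𝓔) : 𝓔 →ₗ[ℂ] 𝓔)) (D.map ((NormedSpace.exp (t ν • 𝔞) : 𝓔 →L[ℂ] 𝓔) : 𝓔 →ₗ[ℂ] 𝓔))
          + pdist (D.map ((NormedSpace.exp (t ν • 𝔞) : 𝓔 →L[ℂ] 𝓔) : 𝓔 →ₗ[ℂ] 𝓔)) D' := pdist_triangle _ _ _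
      _ < ε / 2 + ε / 2 :=
          add_lt_add (by rw [pdist_symm]; exact hR (t ν) (him ν) hν1) hν2
      _ = ε := by ring
  · rintro ⟨hd, hcl⟩
    have key : ∀ ν : ℕ, ∃ s : ℂ, |s.im| ≤ θ ∧ (ν : ℝ) < s.re ∧
        pdist (D.map ((NormedSpace.exp (s • 𝔞) : 𝓔 →L[ℂ] 𝓔) : 𝓔 →ₗ[ℂ] 𝓔)) D' < 1 / ((ν : ℝ) + 1) := by
      intro ν
      set ε : ℝ := 1 / ((ν : ℝ) + 1) with hεdef
      have hε : 0 < ε := by positivity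
      obtain ⟨t₀, ht₀im, ht₀⟩ := hcl (ε / 3) (by positivity)
      obtain ⟨R, hR⟩ := hconv (ε / 3) (by positivity)
      obtain ⟨r, hrR, hrn⟩ := hrec (ε / 6) (by positivity) (max (R - t₀.re) ((ν : ℝ) - t₀.re))
      set s : ℂ := t₀ + (r : ℂ) with hsdef
      have hsim : s.im = t₀.im := by simp [hsdef]
      have hsre : s.re = t₀.re + r := by simp [hsdef]
      have hre1 : R < s.re := by
        have := lt_of_le_of_lt (le_max_left (R - t₀.re) ((ν : ℝ) - t₀.re)) hrR
        rw [hsre]; linarith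
      have hre2 : (ν : ℝ) < s.re := by
        have := lt_of_le_of_lt (le_max_right (R - t₀.re) ((ν : ℝ) - t₀.re)) hrR
        rw [hsre]; linarith
      refine ⟨s, by rw [hsim]; exact ht₀im, hre2, ?_⟩
      have hmapeq : Dinf.map ((NormedSpace.exp (s • 𝔞') : 𝓔 →L[ℂ] 𝓔) : 𝓔 →ₗ[ℂ] 𝓔)
          = (Dinf.map ((NormedSpace.exp (t₀ • 𝔞') : 𝓔 →L[ℂ] 𝓔) : 𝓔 →ₗ[ℂ] 𝓔)).map
              ((NormedSpace.exp (((r : ℝ) : ℂ) • 𝔞') : 𝓔 →L[ℂ] 𝓔) : 𝓔 →ₗ[ℂ] 𝓔) := by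
        rw [← submodule_map_mul, ← hcomm, hsdef, add_comm t₀ ((r : ℝ) : ℂ)]
      have hp2 : pdist (Dinf.map ((NormedSpace.exp (s • 𝔞') : 𝓔 →L[ℂ] 𝓔) : 𝓔 →ₗ[ℂ] 𝓔))
          (Dinf.map ((NormedSpace.exp (t₀ • 𝔞') : 𝓔 →L[ℂ] 𝓔) : 𝓔 →ₗ[ℂ] 𝓔)) < ε / 3 := by
        rw [hmapeq]
        have hg1 : ∀ x : 𝓔, NormedSpace.exp (((r : ℝ) : ℂ) • 𝔞')
            (NormedSpace.exp ((-((r : ℝ) : ℂ)) • 𝔞') x) = x := hinv ((r : ℝ) : ℂ)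
        have hg2 : ∀ x : 𝓔, NormedSpace.exp ((-((r : ℝ) : ℂ)) • 𝔞')
            (NormedSpace.exp (((r : ℝ) : ℂ) • 𝔞') x) = x := by
          intro x
          have := hinv (-((r : ℝ) : ℂ)) x
          rwa [neg_neg] at this
        have hle := pdist_map_le (NormedSpace.exp (((r : ℝ) : ℂ) • 𝔞'))
          (NormedSpace.exp ((-((r : ℝ) : ℂ)) • 𝔞')) hg1 hg2 (hunit r)
          (Dinf.map ((NormedSpace.exp (t₀ • 𝔞') : 𝓔 →L[ℂ] 𝓔) : 𝓔 →ₗ[ℂ] 𝓔))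
        have h6 : 2 * ‖NormedSpace.exp (((r : ℝ) : ℂ) • 𝔞') - 1‖ < ε / 3 := by linarith
        exact lt_of_le_of_lt hle h6
      have hp1 : pdist (D.map ((NormedSpace.exp (s • 𝔞) : 𝓔 →L[ℂ] 𝓔) : 𝓔 →ₗ[ℂ] 𝓔))
          (Dinf.map ((NormedSpace.exp (s • 𝔞') : 𝓔 →L[ℂ] 𝓔) : 𝓔 →ₗ[ℂ] 𝓔)) < ε / 3 :=
        hR s (by rw [hsim]; exact ht₀im) hre1
      set X := D.map ((NormedSpace.exp (s • 𝔞) : 𝓔 →L[ℂ] 𝓔) : 𝓔 →ₗ[ℂ] 𝓔) with hXdef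
      set Y := Dinf.map ((NormedSpace.exp (s • 𝔞') : 𝓔 →L[ℂ] 𝓔) : 𝓔 →ₗ[ℂ] 𝓔) with hYdef
      set Z := Dinf.map ((NormedSpace.exp (t₀ • 𝔞') : 𝓔 →L[ℂ] 𝓔) : 𝓔 →ₗ[ℂ] 𝓔) with hZdef
      calc pdist X D' ≤ pdist X Y + pdist Y D' := pdist_triangle _ _ _
        _ ≤ pdist X Y + (pdist Y Z + pdist Z D') := add_le_add_right (pdist_triangle _ _ _) _
        _ < ε / 3 + (ε / 3 + ε / 3) := add_lt_add hp1 (add_lt_add hp2 ht₀)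
        _ = ε := by ring
    choose s him hre hp using key
    refine ⟨hd, s, him, ?_, ?_⟩
    · exact tendsto_atTop_mono (fun ν => (hre ν).le) tendsto_natCast_atTop_atTop
    · exact squeeze_zero (fun ν => norm_nonneg _) (fun ν => (hp ν).le)
        tendsto_one_div_add_atTop_nhds_zero_nat

end
end

section
/- Let D ⊆ 𝓔 be an arbitrary nonzero subspace. Define D¹ = D and inductively, starting with ℓ = 1: μ_ℓ = max{μ ∈ Re(spec 𝔞) : π̃_μ D^ℓ ≠ 0}, D^{ℓ+1} = ker(π̃_{μ_ℓ}|_{D^ℓ}), and D_{μ_ℓ} = (D^{ℓ+1})^⊥ ∩ D^ℓ. Let L be the smallest ℓ such that D^{ℓ+1} = 0. Then: (i) π̃_{μ_ℓ} restricted to D_{μ_ℓ} is an isomorphism onto π̃_{μ_ℓ}D_{μ_ℓ}; (ii) D = ⊕_{ℓ=1}^L D_{μ_ℓ}; and (iii) for each ℓ there exist Laurent polynomials p̃^ℓ_k with values in π̃_{μ_ℓ}D_{μ_ℓ}, k = 1, …, dim D_{μ_ℓ}, such that, setting q̃^ℓ_k(t) = e^{tÑ_{μ_ℓ}} p̃^ℓ_k(t)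 (again a Laurent polynomial since Ñ_{μ_ℓ} is nilpotent), one has ord(q̃^ℓ_k) = 0 and the vectors g^ℓ_k = coeff_0(q̃^ℓ_k), k = 1, …, dim D_{μ_ℓ}, are linearly independent. -/
set_option maxHeartbeats 1000000
set_option synthInstance.maxHeartbeats 200000


open Filter

noncomputable section

/-- Evaluation of a (vector-valued) Laurent polynomial, given by its finitely supported
family of coefficients `p : ℤ →₀ 𝓔`, at a point `t ∈ ℂ∖{0}`:  `p(t) = Σ_s t^s • p_s`. -/
def lpEval {𝓔 : Type*} [AddCommGroup 𝓔] [Module ℂ 𝓔] (p : ℤ →₀ 𝓔) (t : ℂ) : 𝓔 :=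
  ∑ s ∈ p.support, (t ^ s) • p s

namespace Stmt2Aux

open Finsupp Finset Nat

variable {E : Type*} [NormedAddCommGroup E] [NormedSpace ℂ E]

/-- Evaluation of a Laurent polynomial as a linear map in the coefficients. -/
def LEval (t : ℂ) : (ℤ →₀ E) →ₗ[ℂ] E :=
  Finsupp.lsum ℂ fun s => (t ^ s) • (LinearMap.id : E →ₗ[ℂ] E)

lemma lpEval_eq (p : ℤ →₀ E) (t : ℂ) : lpEval p t = LEval t p := by
  rw [lpEval, LEval, Finsupp.lsum_apply, Finsupp.sum]
  simp

@[simp] lemma LEval_single (t : ℂ) (a : ℤ) (v : E) :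
    LEval t (Finsupp.single a v) = t ^ a • v := by
  simp [LEval]

/-- Shift of a Laurent polynomial (multiplication by `t^z`). -/
def shift (z : ℤ) : (ℤ →₀ E) ≃ₗ[ℂ] (ℤ →₀ E) := Finsupp.domLCongr (Equiv.addRight z)

@[simp] lemma shift_single (z a : ℤ) (v : E) :
    shift z (Finsupp.single a v) = Finsupp.single (a + z) v := by
  simp [shift]

@[simp] lemma shift_apply (z : ℤ) (f : ℤ →₀ E) (s : ℤ) : shift z f s = f (s - z) := by
  simp [shift, Finsupp.domLCongr_apply, Finsupp.domCongr_apply,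
    Finsupp.equivMapDomain_apply, sub_eq_add_neg]

lemma shift_shift (z w : ℤ) (f : ℤ →₀ E) : shift z (shift w f) = shift (z + w) f := by
  ext s; simp [sub_sub]

lemma LEval_shift (t : ℂ) (ht : t ≠ 0) (z : ℤ) (f : ℤ →₀ E) :
    LEval t (shift z f) = t ^ z • LEval t f := by
  induction f using Finsupp.induction_linear with
  | zero => simp
  | add f g hf hg => simp only [map_add, hf, hg, smul_add]
  | single a v =>
      rw [shift_single, LEval_single, LEval_single, zpow_add₀ ht, mul_comm, mul_smul]

lemma LEval_mapRange (t : ℂ) (A : E →ₗ[ℂ] E) (f : ℤ →₀ E) :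
    LEval t (Finsupp.mapRange.linearMap A f) = A (LEval t f) := by
  induction f using Finsupp.induction_linear with
  | zero => simp
  | add f g hf hg => simp only [map_add, hf, hg]
  | single a v => simp

lemma shift_mapRange (z : ℤ) (A : E →ₗ[ℂ] E) (f : ℤ →₀ E) :
    shift z (Finsupp.mapRange.linearMap A f) = Finsupp.mapRange.linearMap A (shift z f) := by
  ext s; simp

/-- Multiplication by the truncated exponential series `∑_{i<n} t^i A^i / i!`. -/
def mulE (n : ℕ) (A : E →ₗ[ℂ] E) : (ℤ →₀ E) →ₗ[ℂ] (ℤ →₀ E) :=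
  ∑ i ∈ Finset.range n,
    ((shift (i : ℤ)).toLinearMap ∘ₗ Finsupp.mapRange.linearMap (((i ! : ℂ))⁻¹ • A ^ i))

lemma mulE_apply (n : ℕ) (A : E →ₗ[ℂ] E) (f : ℤ →₀ E) :
    mulE n A f
      = ∑ i ∈ Finset.range n,
          shift (i : ℤ) (Finsupp.mapRange.linearMap (((i ! : ℂ))⁻¹ • A ^ i) f) := by
  simp [mulE]

lemma mulE_shift (n : ℕ) (A : E →ₗ[ℂ] E) (z : ℤ) (f : ℤ →₀ E) :
    mulE n A (shift z f) = shift z (mulE n A f) := by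
  rw [mulE_apply, mulE_apply, map_sum]
  refine Finset.sum_congr rfl fun i _ => ?_
  rw [← shift_mapRange, shift_shift, shift_shift, add_comm]

lemma LEval_mulE (t : ℂ) (ht : t ≠ 0) (n : ℕ) (A : E →ₗ[ℂ] E) (f : ℤ →₀ E) :
    LEval t (mulE n A f)
      = ∑ i ∈ Finset.range n, (t ^ (i : ℤ) * (i ! : ℂ)⁻¹) • (A ^ i) (LEval t f) := by
  rw [mulE_apply, map_sum]
  refine Finset.sum_congr rfl fun i _ => ?_
  rw [LEval_shift t ht, LEval_mapRange, LinearMap.smul_apply, smul_smul]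

lemma clm_pow_apply (f : E →L[ℂ] E) (i : ℕ) : ∀ v : E, (f ^ i) v = ((f : E →ₗ[ℂ] E) ^ i) v := by
  induction i with
  | zero => intro v; rfl
  | succ m ih =>
      intro v
      rw [pow_succ, pow_succ, ContinuousLinearMap.mul_apply, Module.End.mul_apply]
      exact ih (f v)

lemma exp_nilpotent_apply [CompleteSpace E] (n : ℕ) (Nop : E →L[ℂ] E) (hNil : Nop ^ n = 0)
    (t : ℂ) (v : E) :
    NormedSpace.exp (t • Nop) v
      = ∑ i ∈ Finset.range n, (t ^ (i : ℤ) * (i ! : ℂ)⁻¹) • ((Nop : E →ₗ[ℂ] E) ^ i) v := by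
  rw [congrFun (NormedSpace.exp_eq_tsum (𝕂 := ℂ)) (t • Nop)]
  rw [tsum_eq_sum (s := Finset.range n) (f := fun i => (i ! : ℂ)⁻¹ • (t • Nop) ^ i)
    (by
      intro i hi
      rw [Finset.mem_range, not_lt] at hi
      show (i ! : ℂ)⁻¹ • (t • Nop) ^ i = 0
      rw [smul_pow, pow_eq_zero_of_le hi hNil, smul_zero, smul_zero])]
  rw [ContinuousLinearMap.sum_apply]
  refine Finset.sum_congr rfl fun i _ => ?_
  rw [smul_pow]
  simp only [ContinuousLinearMap.smul_apply]
  rw [smul_smul, mul_comm, zpow_natCast, clm_pow_apply]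

lemma antidiag_sum (k : ℕ) (hk : k ≠ 0) :
    ∑ ij ∈ Finset.HasAntidiagonal.antidiagonal k, ((ij.1 ! : ℂ)⁻¹ * (ij.2 ! : ℂ)⁻¹ * (-1) ^ ij.2) = 0 := by
  rw [Finset.Nat.sum_antidiagonal_eq_sum_range_succ_mk]
  have h1 : ∀ m ∈ Finset.range (k + 1),
      ((m ! : ℂ)⁻¹ * ((k - m)! : ℂ)⁻¹ * (-1) ^ (k - m))
        = ((k ! : ℂ)⁻¹ * (-1) ^ k) * ((-1) ^ m * (k.choose m : ℂ)) := by
    intro m hm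
    rw [Finset.mem_range] at hm
    have hmk : m ≤ k := by omega
    have e1 : ((-1 : ℂ)) ^ (k - m) = (-1) ^ k * (-1) ^ m := by
      have h2 : (-1 : ℂ) ^ k = (-1) ^ (k - m) * (-1) ^ m := by
        rw [← pow_add]; congr 1; omega
      rw [h2, mul_assoc, ← pow_add, ← two_mul, pow_mul]
      norm_num
    rw [Nat.cast_choose ℂ hmk, e1]
    have hm0 : (m ! : ℂ) ≠ 0 := Nat.cast_ne_zero.mpr (Nat.factorial_ne_zero m)
    have hk0 : (k ! : ℂ) ≠ 0 := Nat.cast_ne_zero.mpr (Nat.factorial_ne_zero k)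
    have hkm0 : ((k - m)! : ℂ) ≠ 0 := Nat.cast_ne_zero.mpr (Nat.factorial_ne_zero (k - m))
    field_simp
  rw [Finset.sum_congr rfl h1, ← Finset.mul_sum]
  have h2 : ∑ m ∈ Finset.range (k + 1), ((-1 : ℂ)) ^ m * (k.choose m : ℂ) = 0 := by
    have := Int.alternating_sum_range_choose_of_ne hk
    have := congrArg (Int.cast : ℤ → ℂ) this
    push_cast at this
    convert this using 2
  rw [h2, mul_zero]

lemma mulE_inv (n : ℕ) (hn : 1 ≤ n) (N : E →ₗ[ℂ] E) (hNil : N ^ n = 0) (v : E) :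
    mulE n (-N) (mulE n N (Finsupp.single 0 v)) = Finsupp.single 0 v := by
  have hg : mulE n N (Finsupp.single (0 : ℤ) v)
      = ∑ i ∈ Finset.range n, Finsupp.single (i : ℤ) ((i ! : ℂ)⁻¹ • (N ^ i) v) := by
    rw [mulE_apply]
    refine Finset.sum_congr rfl fun i _ => ?_
    simp
  have hterm : ∀ i j : ℕ,
      shift (j : ℤ) (Finsupp.mapRange.linearMap ((j ! : ℂ)⁻¹ • (-N) ^ j)
          (Finsupp.single (i : ℤ) ((i ! : ℂ)⁻¹ • (N ^ i) v)))
        = ((i ! : ℂ)⁻¹ * (j ! : ℂ)⁻¹ * (-1) ^ j) •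
            Finsupp.single ((i + j : ℕ) : ℤ) ((N ^ (i + j)) v) := by
    intro i j
    have hneg : (-N) ^ j = ((-1 : ℂ) ^ j) • N ^ j := by
      rw [← neg_one_smul ℂ N, smul_pow]
    have hvec : ((j ! : ℂ)⁻¹ • (-N) ^ j) ((i ! : ℂ)⁻¹ • (N ^ i) v)
        = ((i ! : ℂ)⁻¹ * (j ! : ℂ)⁻¹ * (-1) ^ j) • (N ^ (i + j)) v := by
      rw [hneg]
      have hNN : (N ^ j) ((N ^ i) v) = (N ^ (i + j)) v := by
        rw [← Module.End.mul_apply, ← pow_add, add_comm]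
      simp only [LinearMap.smul_apply, map_smul, hNN, smul_smul]
      ring_nf
    rw [Finsupp.mapRange.linearMap_apply, Finsupp.mapRange_single, hvec, shift_single,
      Finsupp.smul_single]
    norm_cast
  have hsum : (mulE n (-N)) ((mulE n N) (Finsupp.single (0 : ℤ) v))
      = ∑ i ∈ Finset.range n, ∑ j ∈ Finset.range n,
          ((i ! : ℂ)⁻¹ * (j ! : ℂ)⁻¹ * (-1) ^ j) •
            Finsupp.single ((i + j : ℕ) : ℤ) ((N ^ (i + j)) v) := by
    rw [hg, map_sum]
    refine Finset.sum_congr rfl fun i _ => ?_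
    rw [mulE_apply]
    exact Finset.sum_congr rfl fun j _ => hterm i j
  rw [hsum]
  set G : ℕ × ℕ → (ℤ →₀ E) := fun ij =>
    ((ij.1 ! : ℂ)⁻¹ * (ij.2 ! : ℂ)⁻¹ * (-1) ^ ij.2) •
      Finsupp.single ((ij.1 + ij.2 : ℕ) : ℤ) ((N ^ (ij.1 + ij.2)) v) with hGdef
  have hGzero : ∀ ij : ℕ × ℕ, n ≤ ij.1 + ij.2 → G ij = 0 := by
    intro ij hij
    rw [hGdef]
    simp only [pow_eq_zero_of_le hij hNil, LinearMap.zero_apply, Finsupp.single_zero, smul_zero]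
  have hstep1 : ∑ i ∈ Finset.range n, ∑ j ∈ Finset.range n,
      ((i ! : ℂ)⁻¹ * (j ! : ℂ)⁻¹ * (-1) ^ j) •
        Finsupp.single ((i + j : ℕ) : ℤ) ((N ^ (i + j)) v)
      = ∑ ij ∈ Finset.range n ×ˢ Finset.range n, G ij := by
    rw [Finset.sum_product]
  have hsubset : (Finset.range n).biUnion (fun k => Finset.HasAntidiagonal.antidiagonal k)
      ⊆ Finset.range n ×ˢ Finset.range n := by
    intro ij hij
    rw [Finset.mem_biUnion] at hij
    obtain ⟨k, hk, hik⟩ := hij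
    rw [Finset.HasAntidiagonal.mem_antidiagonal] at hik
    rw [Finset.mem_range] at hk
    rw [Finset.mem_product, Finset.mem_range, Finset.mem_range]
    omega
  have hstep2 : ∑ ij ∈ Finset.range n ×ˢ Finset.range n, G ij
      = ∑ ij ∈ (Finset.range n).biUnion (fun k => Finset.HasAntidiagonal.antidiagonal k), G ij := by
    refine (Finset.sum_subset hsubset ?_).symm
    intro ij _ hij
    refine hGzero ij ?_
    by_contra hlt
    exact hij (Finset.mem_biUnion.mpr ⟨ij.1 + ij.2, Finset.mem_range.mpr (by omega),
      Finset.HasAntidiagonal.mem_antidiagonal.mpr rfl⟩)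
  have hdisj : ∀ k ∈ (Finset.range n : Finset ℕ), ∀ l ∈ (Finset.range n : Finset ℕ), k ≠ l →
      Disjoint (Finset.HasAntidiagonal.antidiagonal k) (Finset.HasAntidiagonal.antidiagonal l) := by
    intro k _ l _ hkl
    rw [Finset.disjoint_left]
    intro ij h1 h2
    rw [Finset.HasAntidiagonal.mem_antidiagonal] at h1 h2
    exact hkl (h1 ▸ h2)
  have hstep3 : ∑ ij ∈ (Finset.range n).biUnion (fun k => Finset.HasAntidiagonal.antidiagonal k), G ij
      = ∑ k ∈ Finset.range n, ∑ ij ∈ Finset.HasAntidiagonal.antidiagonal k, G ij :=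
    Finset.sum_biUnion hdisj
  have hinner : ∀ k ∈ Finset.range n, k ≠ 0 → ∑ ij ∈ Finset.HasAntidiagonal.antidiagonal k, G ij = 0 := by
    intro k _ hk
    have : ∀ ij ∈ Finset.HasAntidiagonal.antidiagonal k, G ij
        = ((ij.1 ! : ℂ)⁻¹ * (ij.2 ! : ℂ)⁻¹ * (-1) ^ ij.2) •
            Finsupp.single ((k : ℕ) : ℤ) ((N ^ k) v) := by
      intro ij hij
      rw [Finset.HasAntidiagonal.mem_antidiagonal] at hij
      simp only [hGdef]
      rw [hij]
    rw [Finset.sum_congr rfl this, ← Finset.sum_smul, antidiag_sum k hk, zero_smul]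
  rw [hstep1, hstep2, hstep3]
  rw [Finset.sum_eq_single 0 hinner (fun h => absurd (Finset.mem_range.mpr hn) h)]
  rw [Finset.Nat.antidiagonal_zero, Finset.sum_singleton, hGdef]
  simp


lemma coeff_mem_span {d : ℕ} (b : Fin d → E) (g : ℤ →₀ E)
    (hg : g ∈ Submodule.span ℂ (Set.range fun pr : ℤ × Fin d => Finsupp.single pr.1 (b pr.2)))
    (s : ℤ) : g s ∈ Submodule.span ℂ (Set.range b) := by
  induction hg using Submodule.span_induction with
  | mem x hx =>
      obtain ⟨pr, rfl⟩ := hx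
      rw [Finsupp.single_apply]
      split
      · exact Submodule.subset_span ⟨pr.2, rfl⟩
      · exact Submodule.zero_mem _
  | zero => simp only [Finsupp.coe_zero, Pi.zero_apply]; exact Submodule.zero_mem _
  | add x y hx hy ihx ihy => rw [Finsupp.add_apply]; exact Submodule.add_mem _ ihx ihy
  | smul a x hx ih => rw [Finsupp.smul_apply]; exact Submodule.smul_mem _ _ ih

theorem lemA [CompleteSpace E] [FiniteDimensional ℂ E] (Nop : E →L[ℂ] E)
    (n : ℕ) (hn : 1 ≤ n) (hNil : Nop ^ n = 0)
    (d : ℕ) (b : Fin d → E) (hb : LinearIndependent ℂ b) :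
    ∃ p q : Fin d → (ℤ →₀ E),
      (∀ k s, (p k) s ∈ Submodule.span ℂ (Set.range b)) ∧
      (∀ k, ∀ t : ℂ, t ≠ 0 → lpEval (q k) t = NormedSpace.exp (t • Nop) (lpEval (p k) t)) ∧
      (∀ k, ∀ s : ℤ, 0 < s → (q k) s = 0) ∧
      LinearIndependent ℂ fun k => (q k) 0 := by
  rcases Nat.eq_zero_or_pos d with hd0 | hdpos
  · subst hd0
    refine ⟨fun _ => 0, fun _ => 0, fun k => k.elim0, fun k => k.elim0, fun k => k.elim0, ?_⟩
    exact linearIndependent_empty_type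
  obtain ⟨d', hd'⟩ : ∃ d', d = d' + 1 := ⟨d - 1, by omega⟩
  set Nl : E →ₗ[ℂ] E := (Nop : E →ₗ[ℂ] E) with hNl_def
  have hNlnil : Nl ^ n = 0 := by
    apply LinearMap.ext
    intro v
    rw [← clm_pow_apply, hNil]
    rfl
  -- the exponential polynomials
  set g : Fin d → (ℤ →₀ E) := fun j => mulE n Nl (Finsupp.single 0 (b j)) with hg_def
  have hkeyinv : ∀ j, mulE n (-Nl) (g j) = Finsupp.single 0 (b j) :=
    fun j => mulE_inv n hn Nl hNlnil (b j)
  have hgrep : ∀ j, g j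
      = ∑ i ∈ Finset.range n, Finsupp.single (i : ℤ) ((i ! : ℂ)⁻¹ • (Nl ^ i) (b j)) := by
    intro j
    simp only [hg_def, mulE_apply]
    refine Finset.sum_congr rfl fun i _ => ?_
    simp
  have hgsupp : ∀ j (s : ℤ), (s < 0 ∨ (n : ℤ) ≤ s) → g j s = 0 := by
    intro j s hs
    rw [hgrep j, Finsupp.finset_sum_apply]
    refine Finset.sum_eq_zero fun i hi => ?_
    rw [Finset.mem_range] at hi
    rw [Finsupp.single_apply, if_neg (by omega)]
  -- the span `V` and its truncations
  set V : Submodule ℂ (ℤ →₀ E) :=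
    Submodule.span ℂ (Set.range fun pr : ℕ × Fin d => shift (pr.1 : ℤ) (g pr.2)) with hV_def
  set SS : ℤ → Submodule ℂ (ℤ →₀ E) :=
    fun D => V ⊓ Finsupp.supported E ℂ (Set.Iic D) with hSS_def
  set W : ℤ → Submodule ℂ E := fun D => (SS D).map (Finsupp.lapply D) with hW_def
  have hVpos : V ≤ Finsupp.supported E ℂ (Set.Ici 0) := by
    rw [hV_def, Submodule.span_le]
    rintro x ⟨pr, rfl⟩
    rw [SetLike.mem_coe, Finsupp.mem_supported']
    intro s hs
    rw [Set.mem_Ici, not_le] at hs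
    rw [shift_apply]
    exact hgsupp pr.2 _ (Or.inl (by omega))
  have hmem : ∀ (i : ℕ) (j : Fin d) (D : ℤ), (i : ℤ) + n - 1 ≤ D →
      shift (i : ℤ) (g j) ∈ SS D := by
    intro i j D hiD
    refine ⟨Submodule.subset_span ⟨(i, j), rfl⟩, ?_⟩
    rw [SetLike.mem_coe, Finsupp.mem_supported']
    intro s hs
    rw [Set.mem_Iic, not_le] at hs
    rw [shift_apply]
    exact hgsupp j _ (Or.inr (by omega))
  have hVshift : ∀ f ∈ V, shift 1 f ∈ V := by
    intro f hf
    induction hf using Submodule.span_induction with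
    | mem x hx =>
        obtain ⟨pr, rfl⟩ := hx
        refine Submodule.subset_span ⟨(pr.1 + 1, pr.2), ?_⟩
        show shift ((pr.1 + 1 : ℕ) : ℤ) (g pr.2) = shift 1 (shift (pr.1 : ℤ) (g pr.2))
        rw [shift_shift]
        congr 1
        push_cast
        ring
    | zero => rw [map_zero]; exact Submodule.zero_mem _
    | add x y hx hy ihx ihy => rw [map_add]; exact Submodule.add_mem _ ihx ihy
    | smul a x hx ih => rw [map_smul]; exact Submodule.smul_mem _ _ ih
  -- applying `mulE n (-Nl)` maps `V` into the span of singles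
  have hE'single : ∀ (i : ℕ) (j : Fin d),
      mulE n (-Nl) (shift (i : ℤ) (g j)) = Finsupp.single (i : ℤ) (b j) := by
    intro i j
    rw [mulE_shift, hkeyinv j, shift_single, zero_add]
  have hE'V : ∀ f ∈ V, mulE n (-Nl) f
      ∈ Submodule.span ℂ (Set.range fun pr : ℤ × Fin d => Finsupp.single pr.1 (b pr.2)) := by
    intro f hf
    induction hf using Submodule.span_induction with
    | mem x hx =>
        obtain ⟨pr, rfl⟩ := hx
        rw [hE'single pr.1 pr.2]
        exact Submodule.subset_span ⟨((pr.1 : ℤ), pr.2), rfl⟩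
    | zero => rw [map_zero]; exact Submodule.zero_mem _
    | add x y hx hy ihx ihy => rw [map_add]; exact Submodule.add_mem _ ihx ihy
    | smul a x hx ih => rw [map_smul]; exact Submodule.smul_mem _ _ ih
  -- finite dimensionality of the truncations
  have hfd : ∀ D : ℤ, FiniteDimensional ℂ ↥(SS D) := by
    intro D
    have hle : SS D ≤ Finsupp.supported E ℂ (Set.Icc (0 : ℤ) D) := by
      intro f hf
      rw [Finsupp.mem_supported']
      intro s hs
      rw [Set.mem_Icc, not_and_or, not_le, not_le] at hs
      rcases hs with hs | hs
      · exact (Finsupp.mem_supported' ℂ _).mp (hVpos hf.1) s (by rw [Set.mem_Ici, not_le]; omega)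
      · exact (Finsupp.mem_supported' ℂ _).mp hf.2 s (by rw [Set.mem_Iic, not_le]; omega)
    haveI : FiniteDimensional ℂ ↥(Finsupp.supported E ℂ (Set.Icc (0 : ℤ) D)) := by
      have e1 : ↥(Finsupp.supported E ℂ (Set.Icc (0 : ℤ) D)) ≃ₗ[ℂ] (↥(Set.Icc (0 : ℤ) D) →₀ E) :=
        Finsupp.supportedEquivFinsupp _
      have e2 : (↥(Set.Icc (0 : ℤ) D) →₀ E) ≃ₗ[ℂ] (↥(Set.Icc (0 : ℤ) D) → E) :=
        Finsupp.linearEquivFunOnFinite ℂ E _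
      exact (e1.trans e2).symm.finiteDimensional
    exact Submodule.finiteDimensional_of_le hle
  -- rank–nullity step
  have hstep : ∀ D : ℤ, Module.finrank ℂ ↥(SS D)
      = Module.finrank ℂ ↥(SS (D - 1)) + Module.finrank ℂ ↥(W D) := by
    intro D
    haveI := hfd D
    set T : ↥(SS D) →ₗ[ℂ] E := (Finsupp.lapply D).comp (SS D).subtype with hT_def
    have hrange : LinearMap.range T = W D := by
      rw [hT_def, LinearMap.range_comp, Submodule.range_subtype]
    have hSle : SS (D - 1) ≤ SS D := by
      refine inf_le_inf_left _ (Finsupp.supported_mono ?_)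
      intro s hs
      rw [Set.mem_Iic] at hs ⊢
      omega
    have hker : LinearMap.ker T = Submodule.comap (SS D).subtype (SS (D - 1)) := by
      ext x
      rw [LinearMap.mem_ker, Submodule.mem_comap]
      constructor
      · intro hx
        refine ⟨x.2.1, ?_⟩
        rw [SetLike.mem_coe, Finsupp.mem_supported']
        intro s hs
        rw [Set.mem_Iic, not_le] at hs
        rcases eq_or_lt_of_le (show D ≤ s by omega) with hsD | hsD
        · rw [← hsD]; exact hx
        · exact (Finsupp.mem_supported' ℂ _).mp x.2.2 s (by rw [Set.mem_Iic, not_le]; omega)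
      · intro hx
        show x.1 D = 0
        exact (Finsupp.mem_supported' ℂ _).mp hx.2 D (by rw [Set.mem_Iic]; omega)
    have h1 := LinearMap.finrank_range_add_finrank_ker T
    rw [hrange, hker] at h1
    have h2 : Module.finrank ℂ ↥(Submodule.comap (SS D).subtype (SS (D - 1)))
        = Module.finrank ℂ ↥(SS (D - 1)) :=
      (Submodule.comapSubtypeEquivOfLe hSle).finrank_eq
    rw [h2] at h1
    omega
  have hbot : SS (-1 : ℤ) = ⊥ := by
    rw [Submodule.eq_bot_iff]
    intro f hf
    ext s
    rcases le_or_gt s (-1 : ℤ) with hs | hs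
    · exact (Finsupp.mem_supported' ℂ _).mp (hVpos hf.1) s (by rw [Set.mem_Ici, not_le]; omega)
    · exact (Finsupp.mem_supported' ℂ _).mp hf.2 s (by rw [Set.mem_Iic, not_le]; omega)
  have hsum : ∀ D : ℕ, Module.finrank ℂ ↥(SS (D : ℤ))
      = ∑ e ∈ Finset.range (D + 1), Module.finrank ℂ ↥(W (e : ℤ)) := by
    intro D
    induction D with
    | zero =>
        have h0 := hstep 0
        rw [show (0 : ℤ) - 1 = -1 by ring, hbot] at h0
        simpa using h0
    | succ m ih =>
        have h0 := hstep ((m + 1 : ℕ) : ℤ)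
        rw [show ((m + 1 : ℕ) : ℤ) - 1 = (m : ℤ) by push_cast; ring, ih] at h0
        rw [h0]
        exact (Finset.sum_range_succ _ _).symm
  have hWmono : ∀ D : ℤ, W D ≤ W (D + 1) := by
    intro D x hx
    obtain ⟨f, hf, rfl⟩ := hx
    refine ⟨shift 1 f, ⟨hVshift f hf.1, ?_⟩, ?_⟩
    · rw [SetLike.mem_coe, Finsupp.mem_supported']
      intro s hs
      rw [Set.mem_Iic, not_le] at hs
      rw [shift_apply]
      exact (Finsupp.mem_supported' ℂ _).mp hf.2 _ (by rw [Set.mem_Iic, not_le]; omega)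
    · show (shift 1 f) (D + 1) = f D
      rw [shift_apply]
      norm_num
  have hWmono' : ∀ a b : ℤ, a ≤ b → W a ≤ W b := by
    intro a b hab
    exact Int.le_induction (motive := fun n _ => W a ≤ W n) le_rfl
      (fun m _ ih => le_trans ih (hWmono m)) b hab
  -- linear independence of the shifted family
  have hindep_singles :
      LinearIndependent ℂ fun pr : ℕ × Fin d => (Finsupp.single (pr.1 : ℤ) (b pr.2) : ℤ →₀ E) := by
    have h0 : LinearIndependent ℂ
        fun ix : Σ _ : ℤ, Fin d => (Finsupp.single ix.1 (b ix.2) : ℤ →₀ E) :=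
      Finsupp.linearIndependent_single (f := fun _ : ℤ => b) (fun _ => hb)
    have h1 := h0.comp (fun pr : ℕ × Fin d => (⟨(pr.1 : ℤ), pr.2⟩ : Σ _ : ℤ, Fin d))
      (by
        intro pr pr' hpr
        rw [Sigma.mk.inj_iff] at hpr
        obtain ⟨h1, h2⟩ := hpr
        have : pr.1 = pr'.1 := by exact_mod_cast h1
        exact Prod.ext this (by simpa using h2))
    exact h1
  have hindep_shift :
      LinearIndependent ℂ fun pr : ℕ × Fin d => shift (pr.1 : ℤ) (g pr.2) := by
    apply LinearIndependent.of_comp (mulE n (-Nl))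
    have : (⇑(mulE n (-Nl)) ∘ fun pr : ℕ × Fin d => shift (pr.1 : ℤ) (g pr.2))
        = fun pr : ℕ × Fin d => (Finsupp.single (pr.1 : ℤ) (b pr.2) : ℤ →₀ E) := by
      funext pr
      exact hE'single pr.1 pr.2
    rw [this]
    exact hindep_singles
  -- dimension counting
  set D₀ : ℕ := n * d with hD₀_def
  set c : ℕ := n * d' + 2 with hc_def
  have hkey : ∀ i : Fin c, (i : ℤ) + (n : ℤ) - 1 ≤ ((D₀ : ℕ) : ℤ) := by
    intro i
    have h1 : (i : ℤ) < (c : ℤ) := by exact_mod_cast i.2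
    have h2 : (c : ℤ) = (n : ℤ) * (d' : ℤ) + 2 := by rw [hc_def]; push_cast; ring
    have h3 : ((D₀ : ℕ) : ℤ) = (n : ℤ) * ((d' : ℤ) + 1) := by rw [hD₀_def, hd']; push_cast; ring
    have h4 : (1 : ℤ) ≤ (n : ℤ) := by exact_mod_cast hn
    nlinarith
  haveI := hfd (D₀ : ℤ)
  have hcard : c * d ≤ Module.finrank ℂ ↥(SS (D₀ : ℤ)) := by
    set u : Fin c × Fin d → ↥(SS (D₀ : ℤ)) :=
      fun pr => ⟨shift ((pr.1 : ℕ) : ℤ) (g pr.2), hmem pr.1 pr.2 _ (hkey pr.1)⟩ with hu_def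
    have hu : LinearIndependent ℂ u := by
      apply LinearIndependent.of_comp (SS (D₀ : ℤ)).subtype
      have : (⇑(SS (D₀ : ℤ)).subtype ∘ u)
          = (fun pr : ℕ × Fin d => shift (pr.1 : ℤ) (g pr.2))
            ∘ (fun pr : Fin c × Fin d => ((pr.1 : ℕ), pr.2)) := rfl
      rw [this]
      exact hindep_shift.comp _ (by
        intro pr pr' h
        rw [Prod.mk.injEq] at h
        exact Prod.ext (Fin.val_injective h.1) h.2)
    have := hu.fintype_card_le_finrank
    simpa [Fintype.card_prod] using this
  have hWbig : d ≤ Module.finrank ℂ ↥(W (D₀ : ℤ)) := by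
    by_contra hcon
    rw [not_le] at hcon
    have hwle : Module.finrank ℂ ↥(W (D₀ : ℤ)) ≤ d' := by omega
    have hsumle : ∑ e ∈ Finset.range (D₀ + 1), Module.finrank ℂ ↥(W (e : ℤ))
        ≤ (D₀ + 1) * d' := by
      calc ∑ e ∈ Finset.range (D₀ + 1), Module.finrank ℂ ↥(W (e : ℤ))
          ≤ ∑ _e ∈ Finset.range (D₀ + 1), d' := by
            refine Finset.sum_le_sum fun e he => ?_
            rw [Finset.mem_range] at he
            refine le_trans (Submodule.finrank_mono (hWmono' (e : ℤ) (D₀ : ℤ) (by omega))) hwle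
        _ = (D₀ + 1) * d' := by rw [Finset.sum_const, Finset.card_range, smul_eq_mul]
    have hce : c * d = (D₀ + 1) * d' + (d' + 2) := by
      rw [hc_def, hD₀_def, hd']; ring
    have := hcard
    rw [hsum D₀] at this
    omega
  -- choose the independent vectors and their preimages
  set bW := Module.finBasis ℂ ↥(W (D₀ : ℤ)) with hbW_def
  set wv : Fin d → E := fun k => ((bW (Fin.castLE hWbig k) : ↥(W (D₀ : ℤ))) : E) with hwv_def
  have hwv_indep : LinearIndependent ℂ wv := by
    have h1 : LinearIndependent ℂ fun k : Fin d => bW (Fin.castLE hWbig k) :=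
      bW.linearIndependent.comp _ (Fin.castLE_injective _)
    exact h1.map' (W (D₀ : ℤ)).subtype (Submodule.ker_subtype _)
  have hwv_mem : ∀ k, wv k ∈ W (D₀ : ℤ) := fun k => (bW (Fin.castLE hWbig k)).2
  have hex : ∀ k, ∃ f ∈ SS (D₀ : ℤ),
      (Finsupp.lapply ((D₀ : ℕ) : ℤ) : (ℤ →₀ E) →ₗ[ℂ] E) f = wv k := by
    intro k
    obtain ⟨f, hf, hf2⟩ := Submodule.mem_map.mp (hwv_mem k)
    exact ⟨f, hf, hf2⟩
  choose F hF1 hF2 using hex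
  -- the final Laurent polynomials
  refine ⟨fun k => shift (-(D₀ : ℤ)) (mulE n (-Nl) (F k)),
          fun k => shift (-(D₀ : ℤ)) (F k), ?_, ?_, ?_, ?_⟩
  · intro k s
    rw [shift_apply]
    exact coeff_mem_span b _ (hE'V (F k) (hF1 k).1) _
  · intro k t ht
    have hnegnil : (-Nop) ^ n = 0 := by
      rw [← neg_one_smul ℂ Nop, smul_pow, hNil, smul_zero]
    have hsum1 : LEval t (mulE n (-Nl) (F k))
        = NormedSpace.exp (-(t • Nop)) (LEval t (F k)) := by
      rw [LEval_mulE t ht]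
      have := exp_nilpotent_apply n (-Nop) hnegnil t (LEval t (F k))
      rw [smul_neg] at this
      rw [this]
      refine Finset.sum_congr rfl fun i _ => ?_
      congr 1
    have hexp1 : NormedSpace.exp (t • Nop) * NormedSpace.exp (-(t • Nop)) = 1 := by
      letI : NormedAlgebra ℚ (E →L[ℂ] E) := .restrictScalars ℚ ℂ (E →L[ℂ] E)
      rw [← NormedSpace.exp_add_of_commute (Commute.neg_right (Commute.refl _)),
        add_neg_cancel, NormedSpace.exp_zero]
    rw [lpEval_eq, lpEval_eq]
    rw [LEval_shift t ht, LEval_shift t ht, hsum1, map_smul]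
    rw [← ContinuousLinearMap.mul_apply, hexp1, ContinuousLinearMap.one_apply]
  · intro k s hs
    rw [shift_apply]
    exact (Finsupp.mem_supported' ℂ _).mp (hF1 k).2 _ (by rw [Set.mem_Iic, not_le]; omega)
  · have : (fun k => (shift (-(D₀ : ℤ)) (F k)) 0) = wv := by
      funext k
      rw [shift_apply]
      have := hF2 k
      rw [Finsupp.lapply_apply] at this
      rw [show (0 : ℤ) - -(D₀ : ℤ) = (D₀ : ℤ) by ring, this]
    rw [this]
    exact hwv_indep

end Stmt2Aux

/-- the algorithm lemma.  `𝓔` is a finite-dimensional complex inner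
product space making the generalized eigenspaces of `𝔞` pairwise orthogonal; `π μ` is
the projection onto the generalized eigenspace for the eigenvalue `μ` along the others,
`πt μ = Σ_{Re λ = μ} π_λ` is the projection onto `Ẽ_μ`, and `N = 𝔞 − Σ λ π_λ` is the
nilpotent part of `𝔞`.  Let `D ⊆ 𝓔` be a nonzero subspace, `D¹ = D`, and inductively
`μ_ℓ = max{μ ∈ Re(spec 𝔞) : π̃_μ D^ℓ ≠ 0}`, `D^{ℓ+1} = ker (π̃_{μ_ℓ}|_{D^ℓ})`,
`D_{μ_ℓ} = (D^{ℓ+1})^⊥ ∩ D^ℓ`, and let `L` be the smallest `ℓ` with `D^{ℓ+1} = 0`.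
Then (i) `π̃_{μ_ℓ}` restricted to `D_{μ_ℓ}` is an isomorphism onto `π̃_{μ_ℓ}D_{μ_ℓ}`;
(ii) `D = ⊕_{ℓ=1}^L D_{μ_ℓ}`; (iii) for each `ℓ` there are Laurent polynomials
`p̃^ℓ_k` with values in `π̃_{μ_ℓ}D_{μ_ℓ}`, `k = 1,…,dim D_{μ_ℓ}`, such that
`q̃^ℓ_k(t) = e^{tÑ_{μ_ℓ}} p̃^ℓ_k(t)` has `ord q̃^ℓ_k = 0` and the vectors
`g^ℓ_k = coeff₀(q̃^ℓ_k)` are linearly independent. -/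
theorem stmt_2
    (𝓔 : Type*) [NormedAddCommGroup 𝓔] [InnerProductSpace ℂ 𝓔] [FiniteDimensional ℂ 𝓔]
    (𝔞 : 𝓔 →L[ℂ] 𝓔)
    (Λs : Finset ℂ)
    (hΛs : ∀ μ : ℂ, μ ∈ Λs ↔ Module.End.HasEigenvalue (𝔞 : 𝓔 →ₗ[ℂ] 𝓔) μ)
    (horth : ∀ μ ∈ Λs, ∀ μ' ∈ Λs, μ ≠ μ' →
      ∀ x ∈ Module.End.maxGenEigenspace (𝔞 : 𝓔 →ₗ[ℂ] 𝓔) μ,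
      ∀ y ∈ Module.End.maxGenEigenspace (𝔞 : 𝓔 →ₗ[ℂ] 𝓔) μ', @inner ℂ _ _ x y = 0)
    (π : ℂ → (𝓔 →L[ℂ] 𝓔))
    (hπ_id : ∀ μ ∈ Λs, ∀ x ∈ Module.End.maxGenEigenspace (𝔞 : 𝓔 →ₗ[ℂ] 𝓔) μ, π μ x = x)
    (hπ_ann : ∀ μ ∈ Λs, ∀ μ' ∈ Λs, μ ≠ μ' →
      ∀ x ∈ Module.End.maxGenEigenspace (𝔞 : 𝓔 →ₗ[ℂ] 𝓔) μ', π μ x = 0)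
    (hπ_mem : ∀ μ ∈ Λs, ∀ x : 𝓔, π μ x ∈ Module.End.maxGenEigenspace (𝔞 : 𝓔 →ₗ[ℂ] 𝓔) μ)
    -- the projections `π̃_μ` onto `Ẽ_μ = ⊕_{Re λ = μ} 𝓔_λ` and the nilpotent part `N`
    (πt : ℝ → (𝓔 →L[ℂ] 𝓔))
    (hπt : ∀ μ : ℝ, πt μ = ∑ lam ∈ Λs.filter (fun l => l.re = μ), π lam)
    (Nop : 𝓔 →L[ℂ] 𝓔)
    (hNop : Nop = 𝔞 - ∑ lam ∈ Λs, lam • π lam)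
    -- the data of the inductive construction
    (D : Submodule ℂ 𝓔) (hDne : D ≠ ⊥)
    (L : ℕ) (hL : 1 ≤ L)
    (Dseq : ℕ → Submodule ℂ 𝓔) (μseq : ℕ → ℝ) (Dμ : ℕ → Submodule ℂ 𝓔)
    (hD1 : Dseq 1 = D)
    (hmax : ∀ ℓ, 1 ≤ ℓ → ℓ ≤ L →
      (∃ lam ∈ Λs, lam.re = μseq ℓ) ∧
      (Dseq ℓ).map (πt (μseq ℓ) : 𝓔 →ₗ[ℂ] 𝓔) ≠ ⊥ ∧
      (∀ μ' : ℝ, (∃ lam ∈ Λs, lam.re = μ') → (Dseq ℓ).map (πt μ' : 𝓔 →ₗ[ℂ] 𝓔) ≠ ⊥ → μ' ≤ μseq ℓ))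
    (hker : ∀ ℓ, 1 ≤ ℓ → ℓ ≤ L → Dseq (ℓ+1) = Dseq ℓ ⊓ LinearMap.ker (πt (μseq ℓ) : 𝓔 →ₗ[ℂ] 𝓔))
    (hDμ : ∀ ℓ, 1 ≤ ℓ → ℓ ≤ L → Dμ ℓ = (Dseq (ℓ+1))ᗮ ⊓ Dseq ℓ)
    (hLtop : Dseq (L+1) = ⊥)
    (hLmin : ∀ ℓ, 1 ≤ ℓ → ℓ < L → Dseq (ℓ+1) ≠ ⊥) :
    -- (i)  π̃_{μ_ℓ}|_{D_{μ_ℓ}} is an isomorphism onto its image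
    (∀ ℓ, 1 ≤ ℓ → ℓ ≤ L → ∀ x ∈ Dμ ℓ, πt (μseq ℓ) x = 0 → x = 0) ∧
    -- (ii)  D = ⊕_{ℓ=1}^L D_{μ_ℓ}
    ((Finset.Icc 1 L).sup Dμ = D ∧
      ∀ v : ℕ → 𝓔, (∀ ℓ ∈ Finset.Icc 1 L, v ℓ ∈ Dμ ℓ) →
        (∑ ℓ ∈ Finset.Icc 1 L, v ℓ) = 0 → ∀ ℓ ∈ Finset.Icc 1 L, v ℓ = 0) ∧
    -- (iii)  the Laurent polynomials p̃^ℓ_k and q̃^ℓ_k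
    (∀ ℓ, 1 ≤ ℓ → ℓ ≤ L →
      ∃ p q : Fin (Module.finrank ℂ (Dμ ℓ)) → (ℤ →₀ 𝓔),
        (∀ k s, (p k) s ∈ (Dμ ℓ).map (πt (μseq ℓ) : 𝓔 →ₗ[ℂ] 𝓔)) ∧
        (∀ k, ∀ t : ℂ, t ≠ 0 →
          lpEval (q k) t = NormedSpace.exp (t • Nop) (lpEval (p k) t)) ∧
        (∀ k, ∀ s : ℤ, 0 < s → (q k) s = 0) ∧
        LinearIndependent ℂ (fun k => (q k) 0)) := by
  -- part (i)
  have part1 : ∀ ℓ, 1 ≤ ℓ → ℓ ≤ L → ∀ x ∈ Dμ ℓ, πt (μseq ℓ) x = 0 → x = 0 := by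
    intro ℓ h1 h2 x hx hπx
    rw [hDμ ℓ h1 h2] at hx
    obtain ⟨hxo, hxd⟩ := hx
    have hx2 : x ∈ Dseq (ℓ+1) := by
      rw [hker ℓ h1 h2]
      exact ⟨hxd, by rwa [SetLike.mem_coe, LinearMap.mem_ker]⟩
    exact inner_self_eq_zero.mp (Submodule.inner_right_of_mem_orthogonal hx2 hxo)
  -- monotonicity of the chain
  have hmono : ∀ a b : ℕ, 1 ≤ a → a ≤ b → b ≤ L + 1 → Dseq b ≤ Dseq a := by
    intro a b ha hab
    induction b, hab using Nat.le_induction with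
    | base => intro _; exact le_rfl
    | succ m hm ih =>
        intro hm1
        have h1m : 1 ≤ m := le_trans ha hm
        have hmL : m ≤ L := by omega
        have hstep : Dseq (m+1) ≤ Dseq m := by
          rw [hker m h1m hmL]; exact inf_le_left
        exact le_trans hstep (ih (by omega))
  -- part (ii) (a): the sup identity, by downwards induction
  have hsup : ∀ k : ℕ, k ≤ L → Dseq (L + 1 - k) = (Finset.Icc (L + 1 - k) L).sup Dμ := by
    intro k
    induction k with
    | zero =>
        intro _
        simp only [Nat.sub_zero]
        rw [hLtop, Finset.Icc_eq_empty (by omega), Finset.sup_empty]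
    | succ m ih =>
        intro hm
        have hℓeq : L + 1 - (m+1) = L - m := by omega
        rw [hℓeq]
        have h1 : 1 ≤ L - m := by omega
        have h2 : L - m ≤ L := by omega
        have hsucc : (L - m) + 1 = L + 1 - m := by omega
        have hKle : Dseq ((L - m)+1) ≤ Dseq (L - m) := by
          rw [hker (L - m) h1 h2]; exact inf_le_left
        have horth2 := Submodule.sup_orthogonal_inf_of_hasOrthogonalProjection hKle
        have hins : Finset.Icc (L - m) L = insert (L - m) (Finset.Icc ((L - m)+1) L) := by
          ext a
          simp only [Finset.mem_Icc, Finset.mem_insert]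
          omega
        have ih2 := ih (by omega)
        rw [← hsucc] at ih2
        rw [hins, Finset.sup_insert, hDμ (L - m) h1 h2, ← ih2, sup_comm]
        exact horth2.symm
  have hiia : (Finset.Icc 1 L).sup Dμ = D := by
    have h := hsup L le_rfl
    rw [show L + 1 - L = 1 by omega] at h
    rw [← h, hD1]
  -- part (ii) (b): independence, by downwards induction
  have hzero : ∀ k : ℕ, k ≤ L → ∀ v : ℕ → 𝓔,
      (∀ ℓ ∈ Finset.Icc (L + 1 - k) L, v ℓ ∈ Dμ ℓ) →
      (∑ ℓ ∈ Finset.Icc (L + 1 - k) L, v ℓ) = 0 →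
      ∀ ℓ ∈ Finset.Icc (L + 1 - k) L, v ℓ = 0 := by
    intro k
    induction k with
    | zero =>
        intro _ v _ _ ℓ hℓ
        rw [Nat.sub_zero, Finset.Icc_eq_empty (by omega)] at hℓ
        exact absurd hℓ (Finset.notMem_empty _)
    | succ m ih =>
        intro hm v hv hsum0
        have hℓeq : L + 1 - (m+1) = L - m := by omega
        rw [hℓeq] at hv hsum0 ⊢
        have h1 : 1 ≤ L - m := by omega
        have h2 : L - m ≤ L := by omega
        have hins : Finset.Icc (L - m) L = insert (L - m) (Finset.Icc ((L - m)+1) L) := by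
          ext a
          simp only [Finset.mem_Icc, Finset.mem_insert]
          omega
        have hnotmem : (L - m) ∉ Finset.Icc ((L - m)+1) L := by
          simp [Finset.mem_Icc]
        rw [hins, Finset.sum_insert hnotmem] at hsum0
        have hrest : (∑ ℓ ∈ Finset.Icc ((L - m)+1) L, v ℓ) ∈ Dseq ((L - m)+1) := by
          refine Submodule.sum_mem _ fun ℓ hℓ => ?_
          rw [Finset.mem_Icc] at hℓ
          have hvℓ : v ℓ ∈ Dμ ℓ := hv ℓ (by
            rw [hins]
            exact Finset.mem_insert_of_mem (Finset.mem_Icc.mpr hℓ))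
          have hle : Dμ ℓ ≤ Dseq ℓ := by
            rw [hDμ ℓ (by omega) hℓ.2]; exact inf_le_right
          exact hmono ((L - m)+1) ℓ (by omega) hℓ.1 (by omega) (hle hvℓ)
        have hv0 : v (L - m) ∈ Dμ (L - m) := hv (L - m) (by
          rw [hins]; exact Finset.mem_insert_self _ _)
        have hvmem2 : v (L - m) ∈ Dseq ((L - m)+1) := by
          have hvneg : v (L - m) = - ∑ ℓ ∈ Finset.Icc ((L - m)+1) L, v ℓ :=
            eq_neg_of_add_eq_zero_left hsum0
          rw [hvneg]
          exact Submodule.neg_mem _ hrest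
        have hv0' : v (L - m) ∈ (Dseq ((L - m)+1))ᗮ := by
          rw [hDμ (L - m) h1 h2] at hv0
          exact hv0.1
        have hz : v (L - m) = 0 :=
          inner_self_eq_zero.mp (Submodule.inner_right_of_mem_orthogonal hvmem2 hv0')
        rw [hz, zero_add] at hsum0
        intro ℓ hℓ
        rw [hins, Finset.mem_insert] at hℓ
        have ihs := ih (by omega)
        rw [show L + 1 - m = (L - m) + 1 by omega] at ihs
        rcases hℓ with rfl | hℓ
        · exact hz
        · exact ihs v (fun a ha => hv a (by rw [hins]; exact Finset.mem_insert_of_mem ha))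
            hsum0 ℓ hℓ
  have hiib : ∀ v : ℕ → 𝓔, (∀ ℓ ∈ Finset.Icc 1 L, v ℓ ∈ Dμ ℓ) →
      (∑ ℓ ∈ Finset.Icc 1 L, v ℓ) = 0 → ∀ ℓ ∈ Finset.Icc 1 L, v ℓ = 0 := by
    have h := hzero L le_rfl
    rw [show L + 1 - L = 1 by omega] at h
    exact h
  -- nilpotency of Nop
  have hnil : Nop ^ (Module.finrank ℂ 𝓔 + 1) = 0 := by
    set K := Module.finrank ℂ 𝓔 with hK_def
    set A := (𝔞 : 𝓔 →ₗ[ℂ] 𝓔) with hA_def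
    have hstep : ∀ μ ∈ Λs, ∀ x ∈ Module.End.maxGenEigenspace A μ,
        Nop x = (A - μ • 1) x ∧ (A - μ • 1) x ∈ Module.End.maxGenEigenspace A μ := by
      intro μ hμ x hx
      constructor
      · rw [hNop]
        rw [ContinuousLinearMap.sub_apply, ContinuousLinearMap.sum_apply]
        rw [Finset.sum_eq_single μ
          (fun lam hlam hne => by
            rw [ContinuousLinearMap.smul_apply, hπ_ann lam hlam μ hμ hne x hx, smul_zero])
          (fun h => absurd hμ h)]
        rw [ContinuousLinearMap.smul_apply, hπ_id μ hμ x hx]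
        rw [LinearMap.sub_apply, LinearMap.smul_apply, Module.End.one_apply]
        rfl
      · have h1 : A x ∈ Module.End.maxGenEigenspace A μ :=
          Module.End.mapsTo_maxGenEigenspace_of_comm (Commute.refl A) μ hx
        have h2 : (A - μ • 1) x = A x - μ • x := by
          rw [LinearMap.sub_apply, LinearMap.smul_apply, Module.End.one_apply]
        rw [h2]
        exact Submodule.sub_mem _ h1 (Submodule.smul_mem _ _ hx)
    have hN : ∀ μ ∈ Λs, ∀ x ∈ Module.End.maxGenEigenspace A μ, ∀ m : ℕ,
        (Nop ^ m) x = ((A - μ • 1) ^ m) x ∧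
          ((A - μ • 1) ^ m) x ∈ Module.End.maxGenEigenspace A μ := by
      intro μ hμ x hx m
      induction m with
      | zero => exact ⟨rfl, by simpa using hx⟩
      | succ m ih =>
          obtain ⟨ihe, ihm⟩ := ih
          have hc := hstep μ hμ _ ihm
          constructor
          · rw [pow_succ', ContinuousLinearMap.mul_apply, ihe, hc.1,
              pow_succ' (A - μ • 1) m, Module.End.mul_apply]
          · rw [pow_succ' (A - μ • 1) m, Module.End.mul_apply]
            exact hc.2
    have hann : ∀ μ ∈ Λs, ∀ x ∈ Module.End.maxGenEigenspace A μ,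
        ((A - μ • 1) ^ (K + 1)) x = 0 := by
      intro μ hμ x hx
      have hmax' : Module.End.maxGenEigenspace A μ
          = Module.End.genEigenspace A μ (K : ℕ∞) := by
        rw [hK_def]
        exact Module.End.maxGenEigenspace_eq_genEigenspace_finrank A μ
      rw [hmax'] at hx
      have hxker : ((A - μ • 1) ^ K) x = 0 := by
        rw [Module.End.genEigenspace_nat] at hx
        exact LinearMap.mem_ker.mp hx
      rw [pow_succ', Module.End.mul_apply, hxker, map_zero]
    have htop : ∀ x : 𝓔, (Nop ^ (K + 1)) x = 0 := by
      have hspan : (⨆ μ : ℂ, Module.End.maxGenEigenspace A μ) = ⊤ :=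
        Module.End.iSup_maxGenEigenspace_eq_top A
      intro x
      have hx : x ∈ ⨆ μ : ℂ, Module.End.maxGenEigenspace A μ := by
        rw [hspan]; trivial
      refine Submodule.iSup_induction (motive := fun y => (Nop ^ (K + 1)) y = 0)
        (fun μ => Module.End.maxGenEigenspace A μ) hx ?_ ?_ ?_
      · intro μ y hy
        by_cases hμ : μ ∈ Λs
        · rw [(hN μ hμ y hy (K + 1)).1]
          exact hann μ hμ y hy
        · have hbot2 : Module.End.maxGenEigenspace A μ = ⊥ := by
            by_contra hne
            obtain ⟨z, hz, hz0⟩ := (Submodule.ne_bot_iff _).mp hne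
            obtain ⟨kk, hkk⟩ := (Module.End.mem_maxGenEigenspace A μ z).mp hz
            have hzmem : z ∈ Module.End.genEigenspace A μ (kk : ℕ∞) := by
              rw [Module.End.genEigenspace_nat]
              exact LinearMap.mem_ker.mpr hkk
            have hgen : Module.End.HasGenEigenvalue A μ kk := by
              intro hbotk
              rw [hbotk] at hzmem
              exact hz0 ((Submodule.mem_bot ℂ).mp hzmem)
            exact hμ ((hΛs μ).mpr (Module.End.hasEigenvalue_of_hasGenEigenvalue hgen))
          have hy' : y ∈ Module.End.maxGenEigenspace A μ := hy
          rw [hbot2] at hy'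
          rw [Submodule.mem_bot] at hy'
          rw [hy', map_zero]
      · exact map_zero _
      · intro y z hy hz
        rw [map_add, hy, hz, add_zero]
    exact ContinuousLinearMap.ext htop
  -- part (iii)
  have part3 : ∀ ℓ, 1 ≤ ℓ → ℓ ≤ L →
      ∃ p q : Fin (Module.finrank ℂ (Dμ ℓ)) → (ℤ →₀ 𝓔),
        (∀ k s, (p k) s ∈ (Dμ ℓ).map (πt (μseq ℓ) : 𝓔 →ₗ[ℂ] 𝓔)) ∧
        (∀ k, ∀ t : ℂ, t ≠ 0 →
          lpEval (q k) t = NormedSpace.exp (t • Nop) (lpEval (p k) t)) ∧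
        (∀ k, ∀ s : ℤ, 0 < s → (q k) s = 0) ∧
        LinearIndependent ℂ (fun k => (q k) 0) := by
    intro ℓ h1 h2
    set d := Module.finrank ℂ (Dμ ℓ) with hd_def
    set bas := Module.finBasis ℂ ↥(Dμ ℓ) with hbas_def
    set b : Fin d → 𝓔 := fun k => πt (μseq ℓ) ((bas k : ↥(Dμ ℓ)) : 𝓔) with hb_def
    have hbindep : LinearIndependent ℂ b := by
      set T : ↥(Dμ ℓ) →ₗ[ℂ] 𝓔 :=
        ((πt (μseq ℓ) : 𝓔 →ₗ[ℂ] 𝓔).comp (Dμ ℓ).subtype) with hT_def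
      have hTker : LinearMap.ker T = ⊥ := by
        rw [LinearMap.ker_eq_bot']
        intro x hx
        exact Subtype.ext (part1 ℓ h1 h2 x.1 x.2 hx)
      exact bas.linearIndependent.map' T hTker
    have hbmem : ∀ k, b k ∈ (Dμ ℓ).map (πt (μseq ℓ) : 𝓔 →ₗ[ℂ] 𝓔) :=
      fun k => ⟨(bas k : ↥(Dμ ℓ)), (bas k).2, rfl⟩
    obtain ⟨p, q, hp, hq, hq0, hqind⟩ :=
      Stmt2Aux.lemA Nop (Module.finrank ℂ 𝓔 + 1) (by omega) hnil d b hbindep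
    refine ⟨p, q, fun k s => ?_, hq, hq0, hqind⟩
    have hspan : Submodule.span ℂ (Set.range b) ≤ (Dμ ℓ).map (πt (μseq ℓ) : 𝓔 →ₗ[ℂ] 𝓔) := by
      rw [Submodule.span_le]
      rintro x ⟨k, rfl⟩
      exact hbmem k
    exact hspan (hp k s)
  exact ⟨part1, ⟨hiia, hiib⟩, part3⟩


end
end

section
/- Suppose given an orthogonal decomposition 𝒲 = ⊕_{j=0}^J ⊕_{m=0}^{M_j} 𝒲^m_j of a subspace 𝒲 of a finite-dimensional complex inner product space, subspaces 𝒲_{j,m} = ⊕_{m'=m}^{M_j} 𝒲^{m'}_j, and linear maps G^m_j defined on 𝒲_{j,m} with 𝒱^m_j = G^m_j(𝒲^m_j), such that for all j, m: 𝒲_{j,m+1} = (G^m_j)^{-1}(⊕_{j'=0}^{j-1}⊕_{m'=0}^{M_{j'}} 𝒱^{m'}_{j'} + ⊕_{m'=0}^{m-1} 𝒱^{m'}_j), where 𝒲^m_j is the orthogonal complement of 𝒲_{j,m+1} inside 𝒲_{j,m} and 𝒲_{j,M_j+1} = 0. Then the sum Σ_{j=0}^J Σ_{m=0}^{M_j}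 𝒱^m_j is a direct sum, and each restriction G^m_j|_{𝒲^m_j} : 𝒲^m_j → 𝒱^m_j is an isomorphism. -/
noncomputable section

/-- `Wjm Wc M j m = 𝒲_{j,m} = ⊕_{m'=m}^{M_j} 𝒲^{m'}_j` (a `Finset.sup` of submodules;
sums whose upper index is less than the lower index are the zero space). -/
def Wjm {E : Type*} [NormedAddCommGroup E] [InnerProductSpace ℂ E]
    (Wc : ℕ → ℕ → Submodule ℂ E) (M : ℕ → ℕ) (j m : ℕ) : Submodule ℂ E :=
  (Finset.Icc m (M j)).sup (Wc j)

/-- `prevV V M j m = ⊕_{j'=0}^{j-1} ⊕_{m'=0}^{M_{j'}} 𝒱^{m'}_{j'} + ⊕_{m'=0}^{m-1} 𝒱^{m'}_j`. -/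
def prevV {E : Type*} [NormedAddCommGroup E] [InnerProductSpace ℂ E]
    (V : ℕ → ℕ → Submodule ℂ E) (M : ℕ → ℕ) (j m : ℕ) : Submodule ℂ E :=
  ((Finset.range j).sup fun j' => (Finset.range (M j' + 1)).sup (V j')) ⊔
    (Finset.range m).sup (V j)

private lemma stmt4_key_le {a b c d N : ℕ} (hd : d ≤ N)
    (h : a*(N+1)+b ≤ c*(N+1)+d) : a < c ∨ (a = c ∧ b ≤ d) := by
  rcases lt_trichotomy a c with h'|h'|h'
  · exact Or.inl h'
  · subst h'; exact Or.inr ⟨rfl, le_of_add_le_add_left h⟩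
  · exfalso
    have h1 : (c+1)*(N+1) ≤ a*(N+1) := Nat.mul_le_mul_right _ h'
    have h2 : (c+1)*(N+1) = c*(N+1)+(N+1) := by ring
    generalize a*(N+1) = x at h1 h
    generalize c*(N+1) = y at h1 h2 h
    omega

private lemma stmt4_le_prevV {E : Type*} [NormedAddCommGroup E] [InnerProductSpace ℂ E]
    (V : ℕ → ℕ → Submodule ℂ E) (M : ℕ → ℕ) {j m j₀ m₀ : ℕ}
    (h : (j < j₀ ∧ m ≤ M j) ∨ (j = j₀ ∧ m < m₀)) :
    V j m ≤ prevV V M j₀ m₀ := by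
  rcases h with ⟨hj, hm⟩ | ⟨hj, hm⟩
  · have h1 : V j m ≤ (Finset.range (M j + 1)).sup (V j) :=
      Finset.le_sup (Finset.mem_range.mpr (Nat.lt_succ_of_le hm))
    have h2 : (Finset.range (M j + 1)).sup (V j) ≤
        (Finset.range j₀).sup (fun j' => (Finset.range (M j' + 1)).sup (V j')) :=
      Finset.le_sup (f := fun j' => (Finset.range (M j' + 1)).sup (V j'))
        (Finset.mem_range.mpr hj)
    exact le_trans (le_trans h1 h2) le_sup_left
  · subst hj
    exact le_trans (Finset.le_sup (Finset.mem_range.mpr hm)) le_sup_right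

/-- Suppose given an orthogonal decomposition
`𝒲 = ⊕_{j=0}^J ⊕_{m=0}^{M_j} 𝒲^m_j` of a subspace `𝒲` of a finite-dimensional complex
inner product space, subspaces `𝒲_{j,m} = ⊕_{m'=m}^{M_j} 𝒲^{m'}_j`, and linear maps
`G^m_j` (defined on `𝒲_{j,m}`) with `𝒱^m_j = G^m_j(𝒲^m_j)`, such that for all `j ≤ J`,
`m ≤ M_j`:  `𝒲_{j,m+1} = (G^m_j)⁻¹(⊕_{j'<j}⊕_{m'≤M_{j'}} 𝒱^{m'}_{j'} + ⊕_{m'<m} 𝒱^{m'}_j)`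
(preimage taken inside `𝒲_{j,m}`), where `𝒲^m_j` is the orthogonal complement of
`𝒲_{j,m+1}` inside `𝒲_{j,m}` (and `𝒲_{j,M_j+1} = 0`).  Then the sum
`Σ_{j=0}^J Σ_{m=0}^{M_j} 𝒱^m_j` is a direct sum and each restriction
`G^m_j|_{𝒲^m_j} : 𝒲^m_j → 𝒱^m_j` is an isomorphism. -/
theorem stmt_4
    (E : Type*) [NormedAddCommGroup E] [InnerProductSpace ℂ E] [FiniteDimensional ℂ E]
    (𝒲 : Submodule ℂ E) (J : ℕ) (M : ℕ → ℕ)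
    (Wc : ℕ → ℕ → Submodule ℂ E) (G : ℕ → ℕ → (E →ₗ[ℂ] E))
    -- orthogonal decomposition of 𝒲
    (horth : ∀ j ≤ J, ∀ m ≤ M j, ∀ j' ≤ J, ∀ m' ≤ M j', (j, m) ≠ (j', m') →
      ∀ x ∈ Wc j m, ∀ y ∈ Wc j' m', @inner ℂ _ _ x y = 0)
    (hsum : (Finset.range (J+1)).sup (fun j => Wjm Wc M j 0) = 𝒲)
    -- 𝒲^m_j is the orthogonal complement of 𝒲_{j,m+1} inside 𝒲_{j,m}
    (hcomp : ∀ j ≤ J, ∀ m ≤ M j, Wc j m = Wjm Wc M j m ⊓ (Wjm Wc M j (m+1))ᗮ)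
    -- the recurrence 𝒲_{j,m+1} = (G^m_j)⁻¹( previous 𝒱's ) within 𝒲_{j,m}
    (hrec : ∀ j ≤ J, ∀ m ≤ M j, Wjm Wc M j (m+1) =
      Wjm Wc M j m ⊓ Submodule.comap (G j m)
        (prevV (fun j' m' => (Wc j' m').map (G j' m')) M j m)) :
    -- the sum of the 𝒱^m_j is direct …
    (∀ v : ℕ → ℕ → E,
      (∀ j ≤ J, ∀ m ≤ M j, v j m ∈ (Wc j m).map (G j m)) →
      (∑ j ∈ Finset.range (J+1), ∑ m ∈ Finset.range (M j + 1), v j m) = 0 →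
      ∀ j ≤ J, ∀ m ≤ M j, v j m = 0) ∧
    -- … and each G^m_j restricts to an isomorphism of 𝒲^m_j onto 𝒱^m_j
    (∀ j ≤ J, ∀ m ≤ M j, ∀ x ∈ Wc j m, G j m x = 0 → x = 0) := by
  have key : ∀ j ≤ J, ∀ m ≤ M j, ∀ x ∈ Wc j m,
      G j m x ∈ prevV (fun j' m' => (Wc j' m').map (G j' m')) M j m → x = 0 := by
    intro j hj m hm x hx hGx
    rw [hcomp j hj m hm] at hx
    obtain ⟨hx1, hx2⟩ := hx
    have hx3 : x ∈ Wjm Wc M j (m+1) := by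
      rw [hrec j hj m hm]; exact ⟨hx1, hGx⟩
    have h0 : (inner ℂ x x : ℂ) = 0 := (Submodule.mem_orthogonal _ _).mp hx2 x hx3
    exact inner_self_eq_zero.mp h0
  refine ⟨?_, ?_⟩
  case refine_2 =>
    intro j hj m hm x hx hGx
    exact key j hj m hm x hx (by rw [hGx]; exact Submodule.zero_mem _)
  intro v hv hzero
  classical
  by_contra hcon
  push_neg at hcon
  obtain ⟨j₁, hj₁, m₁, hm₁, hne₁⟩ := hcon
  set N := (Finset.range (J+1)).sup M with hN
  have hMN : ∀ j ≤ J, M j ≤ N := fun j hj =>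
    Finset.le_sup (Finset.mem_range.mpr (by omega))
  set s := (Finset.range (J+1)).sigma (fun j => Finset.range (M j + 1)) with hs
  set T := s.filter (fun p => v p.1 p.2 ≠ 0) with hT
  have hTne : T.Nonempty := by
    refine ⟨⟨j₁, m₁⟩, Finset.mem_filter.mpr ⟨Finset.mem_sigma.mpr ⟨?_, ?_⟩, hne₁⟩⟩
    · exact Finset.mem_range.mpr (Nat.lt_succ_of_le hj₁)
    · exact Finset.mem_range.mpr (Nat.lt_succ_of_le hm₁)
  obtain ⟨p₀, hp₀T, hmax⟩ := T.exists_max_image (fun p => p.1 * (N+1) + p.2) hTne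
  obtain ⟨hp₀s, hp₀ne⟩ := Finset.mem_filter.mp hp₀T
  obtain ⟨hp₀1, hp₀2⟩ := Finset.mem_sigma.mp hp₀s
  have hj₀ : p₀.1 ≤ J := by have := Finset.mem_range.mp hp₀1; omega
  have hm₀ : p₀.2 ≤ M p₀.1 := by have := Finset.mem_range.mp hp₀2; omega
  set V : ℕ → ℕ → Submodule ℂ E := fun j' m' => (Wc j' m').map (G j' m') with hV
  have herase : ∀ p ∈ s.erase p₀, v p.1 p.2 ∈ prevV V M p₀.1 p₀.2 := by
    intro p hp
    obtain ⟨hpne, hps⟩ := Finset.mem_erase.mp hp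
    obtain ⟨hp1, hp2⟩ := Finset.mem_sigma.mp hps
    have hpj : p.1 ≤ J := by have := Finset.mem_range.mp hp1; omega
    have hpm : p.2 ≤ M p.1 := by have := Finset.mem_range.mp hp2; omega
    by_cases hvz : v p.1 p.2 = 0
    · rw [hvz]; exact Submodule.zero_mem _
    · have hpT : p ∈ T := Finset.mem_filter.mpr ⟨hps, hvz⟩
      have hle := hmax p hpT
      have hlex := stmt4_key_le (le_trans hm₀ (hMN _ hj₀)) hle
      have hmem : v p.1 p.2 ∈ V p.1 p.2 := hv p.1 hpj p.2 hpm
      refine stmt4_le_prevV V M ?_ hmem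
      rcases hlex with h | ⟨h1, h2⟩
      · exact Or.inl ⟨h, hpm⟩
      · refine Or.inr ⟨h1, ?_⟩
        rcases lt_or_eq_of_le h2 with h3 | h3
        · exact h3
        · exfalso; exact hpne (Sigma.ext h1 (heq_of_eq h3))
  have hsum0 : (∑ p ∈ s, v p.1 p.2) = 0 := by
    rw [hs, Finset.sum_sigma]; exact hzero
  have hv₀mem : v p₀.1 p₀.2 ∈ prevV V M p₀.1 p₀.2 := by
    have heq : v p₀.1 p₀.2 + ∑ p ∈ s.erase p₀, v p.1 p.2 = 0 := by
      rw [Finset.add_sum_erase s (fun p => v p.1 p.2) hp₀s]; exact hsum0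
    have : v p₀.1 p₀.2 = -∑ p ∈ s.erase p₀, v p.1 p.2 :=
      eq_neg_of_add_eq_zero_left heq
    rw [this]
    exact Submodule.neg_mem _ (Submodule.sum_mem _ herase)
  obtain ⟨x, hx, hGx⟩ := hv p₀.1 hj₀ p₀.2 hm₀
  have hx0 : x = 0 := key p₀.1 hj₀ p₀.2 hm₀ x hx (by rw [hGx]; exact hv₀mem)
  apply hp₀ne
  rw [← hGx, hx0, map_zero]

end
end

section
/- Let G be a compact Hausdorff topological group and let φ : ℝ → G be a continuous group homomorphism whose range is dense in G. Then for every T ∈ ℝ the set φ([T, ∞)) is dense in G. -/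
open scoped Pointwise


/-- Let `G` be a compact Hausdorff topological group and let
`φ : ℝ → G` be a continuous group homomorphism (from the additive reals) whose
range is dense in `G`.  Then for every `T ∈ ℝ` the set `φ([T, ∞))` is dense in `G`. -/
theorem stmt_7 (G : Type*) [TopologicalSpace G] [Group G] [IsTopologicalGroup G]
    [CompactSpace G] [T2Space G]
    (φ : ℝ → G) (hcont : Continuous φ)
    (hhom : ∀ s t : ℝ, φ (s + t) = φ s * φ t)
    (hdense : DenseRange φ) :
    ∀ T : ℝ, Dense (φ '' Set.Ici T) := by
  have h0 : φ 0 = 1 := by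
    have := hhom 0 0
    simp only [add_zero] at this
    exact left_eq_mul.mp this
  have hpow : ∀ (t : ℝ) (n : ℕ), φ t ^ n = φ (n * t) := by
    intro t n
    induction n with
    | zero => simp [h0]
    | succ n ih =>
      rw [pow_succ, ih, ← hhom]
      congr 1
      push_cast
      ring
  -- Step 1 : φ '' Ici 0 is dense
  have hd0 : Dense (φ '' Set.Ici 0) := by
    rw [dense_iff_closure_eq]
    apply Set.eq_univ_of_univ_subset
    rw [← hdense.closure_range]
    apply closure_minimal _ isClosed_closure
    rintro _ ⟨t, rfl⟩
    rcases le_or_gt 0 t with ht | ht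
    · exact subset_closure ⟨t, ht, rfl⟩
    · -- φ t = (φ (-t))⁻¹ with -t ≥ 0
      have hinv : φ t = (φ (-t))⁻¹ := by
        have := hhom (-t) t
        simp only [neg_add_cancel, h0] at this
        exact eq_inv_of_mul_eq_one_right this.symm
      have : φ t ∈ closure (Set.range ((φ (-t)) ^ · : ℤ → G)) := by
        apply subset_closure
        exact ⟨-1, by rw [hinv]; simp⟩
      rw [closure_range_zpow_eq_pow] at this
      refine closure_mono ?_ this
      rintro _ ⟨n, rfl⟩
      exact ⟨n * (-t), by simpa using mul_nonneg n.cast_nonneg (neg_nonneg.mpr ht.le), (hpow _ _).symm⟩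
  -- Step 2 : translate
  intro T
  have himg : φ '' Set.Ici T = (φ T) • (φ '' Set.Ici 0) := by
    ext g
    constructor
    · rintro ⟨t, ht, rfl⟩
      exact ⟨φ (t - T), ⟨t - T, by simpa using ht, rfl⟩, by simp only [smul_eq_mul, ← hhom]; ring_nf⟩
    · rintro ⟨_, ⟨s, hs, rfl⟩, rfl⟩
      exact ⟨T + s, by simpa using hs, by simp only [smul_eq_mul]; exact hhom T s⟩
  rw [himg]
  exact hd0.smul (φ T)
end

section
/- Let E, Ẽ be complex Hilbert spaces and let L(E,Ẽ) be the bounded operators with operator norm. Let μ₁, …, μ_N be real numbers that are linearly independent over the rationals, let M ∈ ℕ₀, and for each multi-index α ∈ ℕ₀^N with |α| ≤ M let a_α ∈ L(E,Ẽ). Define f : (0,∞) → L(E,Ẽ) by f(ρ) = Σ_{|α|≤M} a_α · ρ^{i(α₁μ₁+⋯+α_Nμ_N)}. If ‖f(ρ)‖ → 0 as ρ → ∞, then a_α = 0 for every α, and in particular f(ρ) = 0 for all ρ > 0. -/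
open Filter

lemma key {ι V : Type*} [DecidableEq ι] [NormedAddCommGroup V] [NormedSpace ℂ V]
    (S : Finset ι) : ∀ (s : ι → ℝ), Set.InjOn s S → ∀ (c : ι → V),
    Tendsto (fun t : ℝ => ‖∑ j ∈ S, Complex.exp (Complex.I * (s j : ℂ) * (t : ℂ)) • c j‖)
      atTop (nhds 0) →
    ∀ i ∈ S, c i = 0 := by
  induction S using Finset.strongInduction with
  | _ S ih =>
  intro s hs c hlim i hi
  set g : ℝ → V := fun t => ∑ j ∈ S, Complex.exp (Complex.I * (s j : ℂ) * (t : ℂ)) • c j with hg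
  set C : ℝ := 1 + ∑ j ∈ S.erase i, |s j - s i| with hC
  have hCpos : 0 < C := by
    have : (0:ℝ) ≤ ∑ j ∈ S.erase i, |s j - s i| :=
      Finset.sum_nonneg fun j _ => abs_nonneg _
    linarith
  set h : ℝ := Real.pi / C with hh
  have hC_le : ∀ j ∈ S.erase i, |s j - s i| ≤ C := by
    intro j hj
    have := Finset.single_le_sum (f := fun j => |s j - s i|)
      (fun j _ => abs_nonneg _) hj
    linarith
  -- nonvanishing of exponential differences
  have hne : ∀ j ∈ S.erase i,
      Complex.exp (Complex.I * (s j : ℂ) * (h : ℂ)) -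
        Complex.exp (Complex.I * (s i : ℂ) * (h : ℂ)) ≠ 0 := by
    intro j hj hzero
    have hji : j ≠ i := (Finset.mem_erase.mp hj).1
    have hjS : j ∈ S := (Finset.mem_erase.mp hj).2
    have hd : s j - s i ≠ 0 := sub_ne_zero.mpr fun e => hji (hs hjS hi e)
    have heq : Complex.exp (Complex.I * (s j : ℂ) * (h : ℂ)) =
        Complex.exp (Complex.I * (s i : ℂ) * (h : ℂ)) := sub_eq_zero.mp hzero
    have h1 : Complex.exp (Complex.I * (s j : ℂ) * (h : ℂ) -
        Complex.I * (s i : ℂ) * (h : ℂ)) = 1 := by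
      rw [Complex.exp_sub, heq, div_self (Complex.exp_ne_zero _)]
    rw [Complex.exp_eq_one_iff] at h1
    obtain ⟨n, hn⟩ := h1
    have hn' : ((s j - s i) * h : ℝ) = (n : ℝ) * (2 * Real.pi) := by
      have := hn
      have h2 : (Complex.I * (s j : ℂ) * (h : ℂ) - Complex.I * (s i : ℂ) * (h : ℂ)) =
          Complex.I * (((s j - s i) * h : ℝ) : ℂ) := by push_cast; ring
      rw [h2] at this
      have h3 : (((s j - s i) * h : ℝ) : ℂ) = ((n : ℝ) * (2 * Real.pi) : ℝ) := by
        apply mul_left_cancel₀ Complex.I_ne_zero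
        push_cast at this ⊢
        linear_combination this
      exact_mod_cast h3
    have hhpos : 0 < h := div_pos Real.pi_pos hCpos
    have habs : |(s j - s i) * h| ≤ Real.pi := by
      rw [abs_mul, abs_of_pos hhpos, hh]
      calc |s j - s i| * (Real.pi / C) ≤ C * (Real.pi / C) := by
            apply mul_le_mul_of_nonneg_right (hC_le j hj)
            positivity
        _ = Real.pi := by field_simp
    rw [hn'] at habs
    have hn0 : n = 0 := by
      by_contra hn0
      have : (1:ℝ) ≤ |(n:ℝ)| := by
        exact_mod_cast Int.one_le_abs (by exact_mod_cast hn0)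
      have h2pi : (0:ℝ) < 2 * Real.pi := by positivity
      have : (2:ℝ) * Real.pi ≤ |(n:ℝ) * (2 * Real.pi)| := by
        rw [abs_mul, abs_of_pos h2pi]
        nlinarith
      nlinarith [Real.pi_pos]
    rw [hn0] at hn'
    simp at hn'
    rcases hn' with h' | h'
    · exact hd h'
    · exact (ne_of_gt hhpos) h'
  -- erased sum tends to zero
  set c' : ι → V := fun j =>
    (Complex.exp (Complex.I * (s j : ℂ) * (h : ℂ)) -
      Complex.exp (Complex.I * (s i : ℂ) * (h : ℂ))) • c j with hc'
  have hsum : ∀ t : ℝ, ∑ j ∈ S.erase i, Complex.exp (Complex.I * (s j : ℂ) * (t : ℂ)) • c' j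
      = g (t + h) - Complex.exp (Complex.I * (s i : ℂ) * (h : ℂ)) • g t := by
    intro t
    rw [Finset.sum_erase _ (by simp [hc'])]
    rw [hg]
    simp only [Finset.smul_sum, ← Finset.sum_sub_distrib]
    apply Finset.sum_congr rfl
    intro j _
    rw [hc']
    have : Complex.exp (Complex.I * (s j : ℂ) * ((t + h : ℝ) : ℂ)) =
        Complex.exp (Complex.I * (s j : ℂ) * (t : ℂ)) *
        Complex.exp (Complex.I * (s j : ℂ) * (h : ℂ)) := by
      rw [← Complex.exp_add]; congr 1; push_cast; ring
    rw [this]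
    simp only [smul_smul, ← sub_smul]
    congr 1
    ring
  have hlim' : Tendsto (fun t : ℝ =>
      ‖∑ j ∈ S.erase i, Complex.exp (Complex.I * (s j : ℂ) * (t : ℂ)) • c' j‖)
      atTop (nhds 0) := by
    apply squeeze_zero (fun t => norm_nonneg _) (g := fun t => ‖g (t + h)‖ + ‖g t‖)
    · intro t
      rw [hsum t]
      refine (norm_sub_le _ _).trans ?_
      gcongr
      rw [norm_smul]
      have : ‖Complex.exp (Complex.I * (s i : ℂ) * (h : ℂ))‖ = 1 := by
        rw [Complex.norm_exp]
        simp [Complex.mul_re]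
      rw [this, one_mul]
    · have h1 : Tendsto (fun t : ℝ => ‖g (t + h)‖) atTop (nhds 0) :=
        hlim.comp (tendsto_atTop_add_const_right atTop h tendsto_id)
      simpa using h1.add hlim
  have hall : ∀ j ∈ S.erase i, c' j = 0 :=
    ih (S.erase i) (Finset.erase_ssubset hi) s
      (hs.mono (by exact_mod_cast Finset.erase_subset i S)) c' hlim'
  have hcz : ∀ j ∈ S, j ≠ i → c j = 0 := by
    intro j hj hji
    have := hall j (Finset.mem_erase.mpr ⟨hji, hj⟩)
    rw [hc'] at this
    rcases smul_eq_zero.mp this with h' | h'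
    · exact absurd h' (hne j (Finset.mem_erase.mpr ⟨hji, hj⟩))
    · exact h'
  have hgsingle : ∀ t : ℝ, g t = Complex.exp (Complex.I * (s i : ℂ) * (t : ℂ)) • c i := by
    intro t
    rw [hg]
    apply Finset.sum_eq_single_of_mem i hi
    intro j hj hji
    rw [hcz j hj hji, smul_zero]
  have hnorm : ∀ t : ℝ, ‖g t‖ = ‖c i‖ := by
    intro t
    rw [hgsingle t, norm_smul]
    have : ‖Complex.exp (Complex.I * (s i : ℂ) * (t : ℂ))‖ = 1 := by
      rw [Complex.norm_exp]
      simp [Complex.mul_re]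
    rw [this, one_mul]
  have : Tendsto (fun _ : ℝ => ‖c i‖) atTop (nhds 0) := by
    have := hlim
    change Tendsto (fun t : ℝ => ‖g t‖) atTop (nhds 0) at this
    simpa only [hnorm] using this
  have := tendsto_nhds_unique this tendsto_const_nhds
  exact norm_eq_zero.mp this.symm

open Filter in
/-- Let `E`, `F` be complex Hilbert spaces and `L(E,F)` the bounded
operators with the operator norm.  Let `μ₁, …, μ_N` be real numbers that are linearly
independent over the rationals, let `M ∈ ℕ₀`, and for each multi-index `α ∈ ℕ₀^N`
with `|α| ≤ M` (the finite set `A` enumerates exactly those multi-indices) let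
`a_α ∈ L(E,F)`.  Define `f : (0,∞) → L(E,F)` by
`f(ρ) = Σ_{|α|≤M} a_α • ρ^{i(α₁μ₁+⋯+α_Nμ_N)}`, where `ρ^{is} = exp(i s log ρ)`.
If `‖f(ρ)‖ → 0` as `ρ → ∞`, then `a_α = 0` for every `α`, and in particular
`f(ρ) = 0` for all `ρ > 0`. -/
theorem stmt_12 (E F : Type*)
    [NormedAddCommGroup E] [InnerProductSpace ℂ E] [CompleteSpace E]
    [NormedAddCommGroup F] [InnerProductSpace ℂ F] [CompleteSpace F]
    (N : ℕ) (μ : Fin N → ℝ)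
    (hind : ∀ q : Fin N → ℚ, (∑ j, (q j : ℝ) * μ j) = 0 → ∀ j, q j = 0)
    (M : ℕ) (A : Finset (Fin N → ℕ))
    (hA : ∀ α : Fin N → ℕ, α ∈ A ↔ (∑ j, α j) ≤ M)
    (a : (Fin N → ℕ) → (E →L[ℂ] F))
    (f : ℝ → (E →L[ℂ] F))
    (hf : ∀ ρ : ℝ, 0 < ρ →
      f ρ = ∑ α ∈ A,
        Complex.exp (Complex.I * ((∑ j, (α j : ℝ) * μ j : ℝ) : ℂ) * (Real.log ρ : ℂ)) • a α)
    (hlim : Tendsto (fun ρ => ‖f ρ‖) atTop (nhds 0)) :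
    (∀ α ∈ A, a α = 0) ∧ ∀ ρ : ℝ, 0 < ρ → f ρ = 0 := by
  classical
  set s : (Fin N → ℕ) → ℝ := fun α => ∑ j, (α j : ℝ) * μ j with hsdef
  have hinj : Set.InjOn s A := by
    intro α hα β hβ heq
    set q : Fin N → ℚ := fun j => (α j : ℚ) - (β j : ℚ) with hq
    have hq0 : (∑ j, (q j : ℝ) * μ j) = 0 := by
      have : ∑ j, ((q j : ℝ)) * μ j = s α - s β := by
        rw [hsdef]
        rw [← Finset.sum_sub_distrib]
        apply Finset.sum_congr rfl
        intro j _
        push_cast [hq]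
        ring
      rw [this, heq, sub_self]
    have := hind q hq0
    funext j
    have hj : (α j : ℚ) - (β j : ℚ) = 0 := this j
    have : (α j : ℚ) = (β j : ℚ) := by linarith
    exact_mod_cast this
  have hlim' : Tendsto (fun t : ℝ =>
      ‖∑ α ∈ A, Complex.exp (Complex.I * (s α : ℂ) * (t : ℂ)) • a α‖) atTop (nhds 0) := by
    have hcomp : Tendsto (fun t : ℝ => ‖f (Real.exp t)‖) atTop (nhds 0) :=
      hlim.comp Real.tendsto_exp_atTop
    have heq : ∀ t : ℝ, ‖f (Real.exp t)‖ =
        ‖∑ α ∈ A, Complex.exp (Complex.I * (s α : ℂ) * (t : ℂ)) • a α‖ := by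
      intro t
      rw [hf (Real.exp t) (Real.exp_pos t), Real.log_exp]
    simpa only [heq] using hcomp
  have hzero : ∀ α ∈ A, a α = 0 := key A s hinj a hlim'
  refine ⟨hzero, fun ρ hρ => ?_⟩
  rw [hf ρ hρ]
  apply Finset.sum_eq_zero
  intro α hα
  rw [hzero α hα, smul_zero]
end

section
/- Let Λ ⊊ ℂ be a closed sector with vertex 0 and nonempty interior int Λ. Let f₁, …, f_M be holomorphic functions on Λ∖{0} (continuous on Λ∖{0} and holomorphic on int Λ), and let p(z₁,…,z_M) = Σ_{|α|≤D} a_α z₁^{α₁}⋯z_M^{α_M}, where each coefficient a_α : Λ∖{0} → ℂ is smooth and homogeneous of degree 0 (a_α(ρλ) = a_α(λ) for all ρ > 0 and λ ∈ Λ∖{0}). Assume the function λ ↦ p(f₁(λ),…,f_M(λ)) is holomorphic on int Λ except possibly on a discrete set. Then there exists a polynomial p₀ ∈ ℂ[z₁,…,z_M] with constant coefficients such that p(f₁(λ),…,f_M(λ)) = p₀(f₁(λ),…,f_M(λ)) for all λ ∈ Λ∖{0}. -/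
open Complex Set Filter Topology


noncomputable section

/-- The closed sector `{ρ e^{iφ} : ρ ≥ 0, φ ∈ [φ₀, φ₁]} ⊆ ℂ` with vertex `0`. -/
def Sector (φ₀ φ₁ : ℝ) : Set ℂ :=
  {z : ℂ | ∃ ρ : ℝ, 0 ≤ ρ ∧ ∃ φ : ℝ, φ₀ ≤ φ ∧ φ ≤ φ₁ ∧
    z = (ρ : ℂ) * Complex.exp ((φ : ℂ) * Complex.I)}

/-- Let `Λ ⊊ ℂ` be a closed sector with vertex `0` and nonempty
interior.  Let `f₁, …, f_M` be holomorphic functions on `Λ∖{0}` (continuous on `Λ∖{0}`,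
holomorphic on `int Λ`), and let `p(z) = Σ_{|α|≤D} a_α z^α` with coefficients
`a_α : Λ∖{0} → ℂ` smooth and homogeneous of degree `0`.  Assume
`λ ↦ p(f₁(λ),…,f_M(λ))` is holomorphic on `int Λ` except possibly on a set `S` with no
accumulation points in `int Λ`.  Then there is a polynomial `p₀ ∈ ℂ[z₁,…,z_M]` with
constant coefficients such that `p(f₁(λ),…,f_M(λ)) = p₀(f₁(λ),…,f_M(λ))` for all
`λ ∈ Λ∖{0}`. -/
theorem stmt_18
    (φ₀ φ₁ : ℝ) (hangle : φ₀ < φ₁) (hproper : φ₁ - φ₀ < 2 * Real.pi)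
    (M D : ℕ) (f : Fin M → ℂ → ℂ)
    (hfc : ∀ i, ContinuousOn (f i) (Sector φ₀ φ₁ \ {0}))
    (hfh : ∀ i, DifferentiableOn ℂ (f i) (interior (Sector φ₀ φ₁)))
    (A : Finset ((Fin M) →₀ ℕ)) (hdeg : ∀ α ∈ A, (∑ i, α i) ≤ D)
    (a : ((Fin M) →₀ ℕ) → ℂ → ℂ)
    (hasm : ∀ α ∈ A, ContDiffOn ℝ (⊤ : ℕ∞) (a α) (Sector φ₀ φ₁ \ {0}))
    (hahom : ∀ α ∈ A, ∀ ρ : ℝ, 0 < ρ → ∀ lam ∈ Sector φ₀ φ₁ \ {0},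
      a α ((ρ : ℂ) * lam) = a α lam)
    -- p(f₁(λ),…,f_M(λ)) is holomorphic on int Λ except on a set S
    -- without accumulation points in int Λ
    (S : Set ℂ) (hS : ∀ z ∈ interior (Sector φ₀ φ₁), ¬ AccPt z (Filter.principal S))
    (hhol : DifferentiableOn ℂ
      (fun lam => ∑ α ∈ A, a α lam * ∏ i, (f i lam) ^ (α i))
      (interior (Sector φ₀ φ₁) \ S)) :
    ∃ p₀ : MvPolynomial (Fin M) ℂ, ∀ lam ∈ Sector φ₀ φ₁ \ {0},
      (∑ α ∈ A, a α lam * ∏ i, (f i lam) ^ (α i)) =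
        MvPolynomial.eval (fun i => f i lam) p₀ := by
  -- the open sector
  set U : Set ℂ := Complex.exp '' {z : ℂ | z.im ∈ Set.Ioo φ₀ φ₁} with hU
  have hUopen : IsOpen U := Complex.isOpenMap_exp _ (isOpen_Ioo.preimage Complex.continuous_im)
  have hUsub : U ⊆ Sector φ₀ φ₁ \ {0} := by
    rintro z ⟨w, hw, rfl⟩
    refine ⟨⟨Real.exp w.re, (Real.exp_pos _).le, w.im, hw.1.le, hw.2.le, ?_⟩, ?_⟩
    · rw [Complex.ofReal_exp, ← Complex.exp_add, Complex.re_add_im]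
    · simp [Complex.exp_ne_zero]
  have hUint : U ⊆ interior (Sector φ₀ φ₁) :=
    interior_maximal (fun z hz => (hUsub hz).1) hUopen
  -- base point λ₀
  set m : ℝ := (φ₀ + φ₁) / 2 with hm
  have hm0 : φ₀ < m := by simp only [hm]; linarith
  have hm1 : m < φ₁ := by simp only [hm]; linarith
  set lam₀ : ℂ := Complex.exp ((m : ℂ) * Complex.I) with hlam₀
  have hlam₀U : lam₀ ∈ U := ⟨(m : ℂ) * Complex.I, by simp [hm0, hm1], rfl⟩
  have hlam₀mem : lam₀ ∈ Sector φ₀ φ₁ \ {0} := hUsub hlam₀U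
  have hlam₀ne : lam₀ ≠ 0 := Complex.exp_ne_zero _
  -- the ray through λ₀ lies in U
  have hray : ∀ r : ℝ, 0 < r → (r : ℂ) * lam₀ ∈ U := by
    intro r hr
    refine ⟨(Real.log r : ℂ) + (m : ℂ) * Complex.I, by simp [hm0, hm1], ?_⟩
    rw [Complex.exp_add, ← Complex.ofReal_exp, Real.exp_log hr, hlam₀]
  -- candidate polynomial
  refine ⟨∑ α ∈ A, MvPolynomial.monomial α (a α lam₀), ?_⟩
  have heval : ∀ lam : ℂ,
      MvPolynomial.eval (fun i => f i lam) (∑ α ∈ A, MvPolynomial.monomial α (a α lam₀)) =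
        ∑ α ∈ A, a α lam₀ * ∏ i, (f i lam) ^ (α i) := by
    intro lam
    rw [map_sum]
    refine Finset.sum_congr rfl fun α hα => ?_
    rw [MvPolynomial.eval_monomial, Finsupp.prod_pow]
  -- the difference function
  set d : ℂ → ℂ := fun lam =>
    (∑ α ∈ A, a α lam * ∏ i, (f i lam) ^ (α i)) -
      ∑ α ∈ A, a α lam₀ * ∏ i, (f i lam) ^ (α i) with hd
  -- continuity of d on Λ \ {0}
  have hdcont : ContinuousOn d (Sector φ₀ φ₁ \ {0}) := by
    apply ContinuousOn.sub
    · exact continuousOn_finset_sum _ fun α hα =>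
        ((hasm α hα).continuousOn).mul
          (continuousOn_finset_prod _ fun i _ => (hfc i).pow _)
    · exact continuousOn_finset_sum _ fun α hα =>
        continuousOn_const.mul (continuousOn_finset_prod _ fun i _ => (hfc i).pow _)
  -- differentiability of d on int Λ \ S
  have hdiffIS : DifferentiableOn ℂ d (interior (Sector φ₀ φ₁) \ S) := by
    apply DifferentiableOn.sub hhol
    apply DifferentiableOn.fun_sum
    intro α hα
    exact ((DifferentiableOn.fun_finset_prod fun i _ =>
      ((hfh i).mono diff_subset).pow _)).const_mul _
  -- d is differentiable on all of U (removable singularities)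
  have hdU : DifferentiableOn ℂ d U := by
    intro z hz
    have hacc := hS z (hUint hz)
    rw [accPt_iff_nhds] at hacc
    push_neg at hacc
    obtain ⟨t, ht, htS⟩ := hacc
    have ht' : t ∩ U ∈ 𝓝 z := inter_mem ht (hUopen.mem_nhds hz)
    have hdiff : DifferentiableOn ℂ d ((t ∩ U) \ {z}) := by
      apply hdiffIS.mono
      rintro y ⟨⟨hyt, hyU⟩, hyz⟩
      exact ⟨hUint hyU, fun hyS => hyz (htS y ⟨hyt, hyS⟩)⟩
    have hcont : ContinuousAt d z :=
      (hdcont.mono hUsub).continuousAt (hUopen.mem_nhds hz)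
    have := (Complex.differentiableOn_compl_singleton_and_continuousAt_iff ht').mp
      ⟨hdiff, hcont⟩
    exact (this.differentiableAt ht').differentiableWithinAt
  have hanalytic : AnalyticOnNhd ℂ d U := hdU.analyticOnNhd hUopen
  -- U is preconnected
  have hpre : IsPreconnected U := by
    have hconv : Convex ℝ {z : ℂ | z.im ∈ Set.Ioo φ₀ φ₁} := by
      have := (convex_Ioo φ₀ φ₁).linear_preimage (Complex.imCLM : ℂ →L[ℝ] ℝ).toLinearMap
      exact this
    exact (hconv.isPreconnected).image _ Complex.continuous_exp.continuousOn
  -- d vanishes on the ray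
  have hdray : ∀ r : ℝ, 0 < r → d ((r : ℂ) * lam₀) = 0 := by
    intro r hr
    rw [hd, sub_eq_zero]
    refine Finset.sum_congr rfl fun α hα => ?_
    rw [hahom α hα r hr lam₀ hlam₀mem]
  -- hence frequently zero near λ₀
  have hfreq : ∃ᶠ z in 𝓝[≠] lam₀, d z = 0 := by
    have htend : Tendsto (fun n : ℕ => ((1 + 1 / (n + 1) : ℝ) : ℂ) * lam₀) atTop (𝓝[≠] lam₀) := by
      apply tendsto_nhdsWithin_of_tendsto_nhds_of_eventually_within
      · have h1 : Tendsto (fun n : ℕ => (1 + 1 / (n + 1) : ℝ)) atTop (𝓝 1) := by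
          have := tendsto_one_div_add_atTop_nhds_zero_nat (𝕜 := ℝ)
          simpa using (tendsto_const_nhds.add this)
        have h2 := (Complex.continuous_ofReal.tendsto (1:ℝ)).comp h1
        rw [Complex.ofReal_one] at h2
        simpa using h2.mul_const lam₀
      · filter_upwards with n
        simp only [Set.mem_compl_iff, Set.mem_singleton_iff]
        intro h
        have hc : ((1 + 1 / ((n:ℝ) + 1) : ℝ) : ℂ) = 1 :=
          mul_right_cancel₀ hlam₀ne (by rw [one_mul]; exact h)
        have hr : (1 + 1 / ((n:ℝ) + 1) : ℝ) = 1 := by exact_mod_cast hc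
        have hpos : (0:ℝ) < 1 / ((n:ℝ) + 1) := by positivity
        linarith
    have hall : ∀ n : ℕ, d (((1 + 1 / (n + 1) : ℝ) : ℂ) * lam₀) = 0 := fun n =>
      hdray _ (by positivity)
    exact htend.frequently (Eventually.of_forall hall).frequently
  -- identity theorem: d ≡ 0 on U
  have hzeroU : Set.EqOn d 0 U :=
    hanalytic.eqOn_zero_of_preconnected_of_frequently_eq_zero hpre hlam₀U hfreq
  -- Λ \ {0} ⊆ closure U
  have hclosure : ∀ lam ∈ Sector φ₀ φ₁ \ {0}, lam ∈ closure U := by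
    rintro lam ⟨⟨ρ, hρ, φ, hφ₀, hφ₁, rfl⟩, hne⟩
    have hρpos : 0 < ρ := by
      rcases hρ.lt_or_eq with h | h
      · exact h
      · exfalso; apply hne; simp [← h]
    rw [mem_closure_iff_seq_limit]
    refine ⟨fun n => (ρ : ℂ) * Complex.exp (((φ + (m - φ) / (n + 1) : ℝ) : ℂ) * Complex.I),
      fun n => ?_, ?_⟩
    · set ψ : ℝ := φ + (m - φ) / (n + 1) with hψdef
      set s : ℝ := 1 / ((n:ℝ) + 1) with hs
      have hs0 : 0 < s := by positivity
      have hs1 : s ≤ 1 := by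
        rw [hs]; rw [div_le_one (by positivity)]; linarith [Nat.cast_nonneg (α := ℝ) n]
      have hψ : ψ = φ + s * (m - φ) := by rw [hψdef, hs]; ring
      have hψ0 : φ₀ < ψ := by rw [hψ]; nlinarith
      have hψ1 : ψ < φ₁ := by rw [hψ]; nlinarith
      exact ⟨(Real.log ρ : ℂ) + (ψ : ℂ) * Complex.I,
        by simp [hψ0, hψ1],
        by rw [Complex.exp_add, ← Complex.ofReal_exp, Real.exp_log hρpos]⟩
    · have h0 : Tendsto (fun n : ℕ => (φ + (m - φ) / (n + 1) : ℝ)) atTop (𝓝 φ) := by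
        have h1 : Tendsto (fun n : ℕ => ((m - φ) / (n + 1) : ℝ)) atTop (𝓝 0) := by
          have := tendsto_one_div_add_atTop_nhds_zero_nat (𝕜 := ℝ)
          have h2 := this.const_mul (m - φ)
          simpa [div_eq_mul_inv, mul_comm] using h2
        simpa using tendsto_const_nhds.add h1
      have hc : Continuous (fun ψ : ℝ => (ρ : ℂ) * Complex.exp ((ψ : ℂ) * Complex.I)) :=
        continuous_const.mul (Complex.continuous_exp.comp
          (Complex.continuous_ofReal.mul continuous_const))
      exact (hc.tendsto φ).comp h0
  -- conclude
  intro lam hlam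
  rw [heval lam]
  have hcl := hclosure lam hlam
  have hnb : (𝓝[U] lam).NeBot := mem_closure_iff_nhdsWithin_neBot.mp hcl
  have h1 : Tendsto d (𝓝[U] lam) (𝓝 (d lam)) :=
    ((hdcont lam hlam).mono hUsub).tendsto
  have h2 : Tendsto d (𝓝[U] lam) (𝓝 0) := by
    refine Tendsto.congr' ?_ tendsto_const_nhds
    filter_upwards [self_mem_nhdsWithin] with z hz
    exact (hzeroU hz).symm
  have : d lam = 0 := tendsto_nhds_unique h1 h2
  exact sub_eq_zero.mp this

end
end
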